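/- arXiv:2105.11771 — 7 statements merged into one kernel-verified Lean document; each statement's English description precedes it below -/
import Mathlib

section
/- The double integral over [0,π/2]² of (log(cos(x/2)) − log(cos(z/2)))/(cos x − cos z) dx dz equals π·G − (7/4)·ζ(3), where G is Catalan's constant. -/
/-!
Put `p = sin² (x/2)` and `q = sin² (z/2)`. Then `cos x - cos z = 2 (q - p)` and
`log cos (x/2) = ½ log (1 - p)`, so the integrand is `¼ ∫₀¹ du / ((1 - u p)(1 - u q))` and,
by Fubini, the double integral is `¼ ∫₀¹ g(u)² du` with `g(u) = ∫₀^{π/2} dx / (1 - u sin² (x/2))`.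
An arctangent primitive gives `g(1 - s²) = 2 arctan s / s`, and the substitution
`u = 1 - tan² (t/2)` turns `¼ ∫₀¹ g²` into `½ ∫₀^{π/2} t² / sin t`. Finally
`1 / sin t = 2 ∑_{k<n} sin ((2k+1) t) + cos (2nt) / sin t`; integrating against `t²` and letting
`n → ∞` (Riemann–Lebesgue) gives `∫₀^{π/2} t² / sin t = ∑ₖ 2 (π (-1)ᵏ / (2k+1)² - 2 / (2k+1)³)`,
which is `2πG - (7/2) ζ(3)` because the odd terms of `ζ(3)` make up `7/8` of it.
-/

open Real MeasureTheory Filter Topology Set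

theorem intervalIntegral_swap_of_continuous {E : Type*} [NormedAddCommGroup E] [NormedSpace ℝ E]
    {F : ℝ → ℝ → E} (hF : Continuous (Function.uncurry F)) (a b c d : ℝ) :
    ∫ x in a..b, ∫ y in c..d, F x y = ∫ y in c..d, ∫ x in a..b, F x y :=
  intervalIntegral_intervalIntegral_swap <|
    (hF.continuousOn.integrableOn_compact (isCompact_uIcc.prod isCompact_uIcc)).mono_set
      (prod_mono uIoc_subset_uIcc uIoc_subset_uIcc)

theorem tendsto_integral_mul_cos_cocompact {f : ℝ → ℝ} (hf : Integrable f) :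
    Tendsto (fun w : ℝ => ∫ t, f t * cos (w * t)) (cocompact ℝ) (𝓝 0) := by
  have hscale : Tendsto (fun w : ℝ => w * (2 * π)⁻¹) (cocompact ℝ) (cocompact ℝ) :=
    tendsto_cocompact_mul_right₀ (by positivity)
  have h := (Complex.continuous_re.tendsto 0).comp
    ((Real.tendsto_integral_exp_smul_cocompact (fun t => (f t : ℂ))).comp hscale)
  rw [Complex.zero_re] at h
  refine h.congr fun w => ?_
  have hint : Integrable (fun t : ℝ => Real.fourierChar (-(t * (w * (2 * π)⁻¹))) • (f t : ℂ)) := by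
    simpa [real_inner_comm, mul_comm] using
      (Real.fourierIntegral_convergent_iff (μ := volume) (w * (2 * π)⁻¹)).2 hf.ofReal
  simp only [Function.comp_apply]
  rw [← RCLike.re_eq_complex_re, ← integral_re hint]
  congr with t
  rw [Circle.smul_def, Real.fourierChar_apply, smul_eq_mul, RCLike.re_eq_complex_re,
    Complex.mul_re, Complex.exp_ofReal_mul_I_re, Complex.ofReal_re, Complex.ofReal_im, mul_zero,
    sub_zero, show 2 * π * -(t * (w * (2 * π)⁻¹)) = -(w * t) by field_simp, cos_neg, mul_comm]

theorem IntervalIntegrable.tendsto_integral_mul_cos {f : ℝ → ℝ} {a b : ℝ}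
    (hf : IntervalIntegrable f volume a b) :
    Tendsto (fun w : ℝ => ∫ t in a..b, f t * cos (w * t)) (cocompact ℝ) (𝓝 0) := by
  have h := tendsto_integral_mul_cos_cocompact (hf.def'.integrable_indicator measurableSet_uIoc)
  have hind : ∀ w : ℝ, ∫ t, (uIoc a b).indicator f t * cos (w * t)
      = ∫ t in uIoc a b, f t * cos (w * t) := fun w => by
    rw [← MeasureTheory.integral_indicator measurableSet_uIoc]
    congr with t
    exact (indicator_mul_left _ f (fun t => cos (w * t))).symm
  simp_rw [hind] at h
  simp_rw [intervalIntegral.intervalIntegral_eq_integral_uIoc]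
  simpa using h.const_smul (if a ≤ b then (1:ℝ) else -1)

theorem log_one_sub_sub_log_one_sub_div_eq_integral {p q : ℝ} (hp : p < 1) (hq : q < 1)
    (hpq : p ≠ q) :
    (log (1 - p) - log (1 - q)) / (q - p) = ∫ u in (0:ℝ)..1, ((1 - u * p) * (1 - u * q))⁻¹ := by
  have hpos : ∀ {r : ℝ}, r < 1 → ∀ u ∈ uIcc (0:ℝ) 1, 0 < 1 - u * r := by
    intro r hr u hu
    rw [uIcc_of_le zero_le_one] at hu
    rcases le_or_gt 0 r with hr0 | hr0 <;> nlinarith [hu.1, hu.2]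
  have hderiv : ∀ u ∈ uIcc (0:ℝ) 1,
      HasDerivAt (fun u => (log (1 - u * q) - log (1 - u * p)) / (p - q))
        ((1 - u * p) * (1 - u * q))⁻¹ u := by
    intro u hu
    have hlog : ∀ {r : ℝ}, r < 1 → HasDerivAt (fun u => log (1 - u * r)) (-r / (1 - u * r)) u :=
      fun hr => by
        simpa using ((hasDerivAt_id u).mul_const _).const_sub 1 |>.log (hpos hr u hu).ne'
    refine ((hlog hq).sub (hlog hp)).div_const _ |>.congr_deriv ?_
    have hp' := (hpos hp u hu).ne'
    have hq' := (hpos hq u hu).ne'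
    have hpq' := sub_ne_zero.2 hpq
    rw [div_eq_iff hpq', div_sub_div _ _ hq' hp']
    field_simp
    ring
  have hcont : ContinuousOn (fun u : ℝ => ((1 - u * p) * (1 - u * q))⁻¹) (uIcc 0 1) :=
    (by fun_prop : Continuous fun u : ℝ => (1 - u * p) * (1 - u * q)).continuousOn.inv₀
      fun u hu => (mul_pos (hpos hp u hu) (hpos hq u hu)).ne'
  rw [intervalIntegral.integral_eq_sub_of_hasDerivAt hderiv hcont.intervalIntegrable]
  field_simp [sub_ne_zero.2 hpq, sub_ne_zero.2 hpq.symm]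
  simp only [mul_zero, sub_zero, log_one, sub_self]
  ring

theorem cos_eq_one_sub_two_mul_sin_half_sq (x : ℝ) : cos x = 1 - 2 * sin (x / 2) ^ 2 := by
  have h := cos_two_mul' (x / 2)
  rw [mul_div_cancel₀ x two_ne_zero] at h
  linarith [cos_sq_add_sin_sq (x / 2)]

theorem sin_half_sq_le_half {x : ℝ} (hx : 0 ≤ cos x) : sin (x / 2) ^ 2 ≤ 1 / 2 := by
  linarith [cos_eq_one_sub_two_mul_sin_half_sq x]

theorem hasDerivAt_tan_half {t : ℝ} (ht : cos (t / 2) ≠ 0) :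
    HasDerivAt (fun t => tan (t / 2)) (1 / cos (t / 2) ^ 2 / 2) t := by
  have h : HasDerivAt (fun t => tan (t / 2)) (1 / cos (t / 2) ^ 2 * (1 / 2)) t :=
    ((hasDerivAt_tan ht).comp t ((hasDerivAt_id' t).div_const 2) :)
  exact h.congr_deriv (by ring)

theorem one_sub_cos_two_mul_eq_sum (n : ℕ) (t : ℝ) :
    1 - cos (2 * n * t) = ∑ k ∈ Finset.range n, 2 * sin t * sin ((2 * k + 1) * t) := by
  induction n with
  | zero => simp
  | succ n ih =>
    have hprod : 2 * sin t * sin ((2 * n + 1) * t) = cos (2 * n * t) - cos (2 * (n + 1) * t) := by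
      rw [show 2 * (n : ℝ) * t = (2 * n + 1) * t - t by ring,
        show 2 * ((n : ℝ) + 1) * t = (2 * n + 1) * t + t by ring, cos_sub, cos_add]
      ring
    rw [Finset.sum_range_succ, ← ih, hprod]
    push_cast
    ring

theorem sq_div_sin_eq_sum_add {t : ℝ} (ht : sin t ≠ 0) (n : ℕ) :
    t ^ 2 / sin t = (∑ k ∈ Finset.range n, 2 * (t ^ 2 * sin ((2 * k + 1) * t)))
      + t ^ 2 / sin t * cos (2 * n * t) := by
  calc t ^ 2 / sin t = t ^ 2 / sin t * (1 - cos (2 * n * t)) + t ^ 2 / sin t * cos (2 * n * t) := by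
        ring
    _ = _ := by
      rw [one_sub_cos_two_mul_eq_sum, Finset.mul_sum]
      congr 1
      exact Finset.sum_congr rfl fun k _ => by field_simp

theorem summable_one_div_nat_add_one_pow {p : ℕ} (hp : 1 < p) :
    Summable (fun n : ℕ => 1 / ((n : ℝ) + 1) ^ p) := by
  simpa using (summable_nat_add_iff 1).2 (Real.summable_one_div_nat_pow.2 hp)

theorem summable_one_div_two_mul_add_one_pow {p : ℕ} (hp : 1 < p) :
    Summable (fun k : ℕ => 1 / (2 * (k : ℝ) + 1) ^ p) := by
  simpa [Function.comp_def] using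
    (summable_one_div_nat_add_one_pow hp).comp_injective (mul_right_injective₀ two_ne_zero)

theorem summable_neg_one_pow_div_two_mul_add_one_sq :
    Summable (fun k : ℕ => (-1 : ℝ) ^ k / (2 * k + 1) ^ 2) :=
  (summable_one_div_two_mul_add_one_pow one_lt_two).of_norm_bounded fun k => by simp

theorem tsum_one_div_two_mul_add_one_pow {p : ℕ} (hp : 1 < p) :
    ∑' k : ℕ, 1 / (2 * (k : ℝ) + 1) ^ p = (1 - 1 / 2 ^ p) * ∑' n : ℕ, 1 / ((n : ℝ) + 1) ^ p := by
  have hodd : ∀ k : ℕ,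
      1 / (((2 * k + 1 : ℕ) : ℝ) + 1) ^ p = 1 / 2 ^ p * (1 / ((k : ℝ) + 1) ^ p) := fun k => by
    push_cast
    rw [show (2 * (k : ℝ) + 1 + 1) = 2 * (k + 1) by ring, mul_pow]
    field_simp
  have h := tsum_even_add_odd (f := fun n : ℕ => 1 / ((n : ℝ) + 1) ^ p)
    (by simpa using summable_one_div_two_mul_add_one_pow hp)
    (by simpa only [hodd] using (summable_one_div_nat_add_one_pow hp).mul_left _)
  simp only [hodd, tsum_mul_left, Nat.cast_mul, Nat.cast_ofNat] at h
  linarith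

theorem integral_sq_mul_sin_two_mul_add_one_mul (k : ℕ) :
    ∫ t in (0:ℝ)..π / 2, t ^ 2 * sin ((2 * k + 1) * t)
      = π * (-1) ^ k / (2 * k + 1) ^ 2 - 2 / (2 * k + 1) ^ 3 := by
  set a : ℝ := 2 * k + 1 with ha_def
  have ha : a ≠ 0 := by positivity
  have hF : ∀ t, HasDerivAt
      (fun t => -(t ^ 2 * cos (a * t)) / a + 2 * t * sin (a * t) / a ^ 2 + 2 * cos (a * t) / a ^ 3)
      (t ^ 2 * sin (a * t)) t := by
    intro t
    have hlin : HasDerivAt (fun t => a * t) a t := by simpa using (hasDerivAt_id t).const_mul a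
    have hc := (hasDerivAt_cos (a * t)).comp t hlin
    have hs := (hasDerivAt_sin (a * t)).comp t hlin
    have H := ((((hasDerivAt_pow 2 t).mul hc).neg.div_const a).add
      ((((hasDerivAt_id t).const_mul 2).mul hs).div_const (a ^ 2))).add
      ((hc.const_mul 2).div_const (a ^ 3))
    refine H.congr_deriv ?_
    simp only [Function.comp_apply, id]
    field_simp
    ring
  have hend : a * (π / 2) = π / 2 + k * π := by rw [ha_def]; ring
  rw [intervalIntegral.integral_eq_sub_of_hasDerivAt (fun t _ => hF t)
    ((by fun_prop : Continuous fun t => t ^ 2 * sin (a * t)).intervalIntegrable _ _),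
    hend, sin_add_nat_mul_pi, cos_add_nat_mul_pi]
  simp only [cos_pi_div_two, sin_pi_div_two, mul_zero, mul_one, neg_zero, zero_div, add_zero,
    zero_add, cos_zero, sin_zero]
  ring

theorem abs_sq_div_sin_le {t : ℝ} (h0 : 0 < t) (h1 : t ≤ π / 2) :
    |t ^ 2 / sin t| ≤ π ^ 2 / 4 := by
  have hjordan : 2 / π * t ≤ sin t := mul_le_sin h0.le h1
  have hsin : 0 < sin t := lt_of_lt_of_le (by positivity) hjordan
  rw [abs_of_nonneg (by positivity), div_le_iff₀ hsin]
  calc t ^ 2 ≤ π / 2 * t := by nlinarith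
    _ = π ^ 2 / 4 * (2 / π * t) := by field_simp; ring
    _ ≤ π ^ 2 / 4 * sin t := by gcongr

theorem intervalIntegrable_sq_div_sin :
    IntervalIntegrable (fun t => t ^ 2 / sin t) volume 0 (π / 2) := by
  rw [intervalIntegrable_iff_integrableOn_Ioc_of_le (by positivity)]
  refine Measure.integrableOn_of_bounded (M := π ^ 2 / 4) (by simp)
    (by fun_prop : Measurable fun t : ℝ => t ^ 2 / sin t).aestronglyMeasurable ?_
  filter_upwards [ae_restrict_mem measurableSet_Ioc] with t ht
  exact abs_sq_div_sin_le ht.1 ht.2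

theorem integral_sq_div_sin_eq_sum_add (n : ℕ) :
    ∫ t in (0:ℝ)..π / 2, t ^ 2 / sin t =
      (∑ k ∈ Finset.range n, 2 * ∫ t in (0:ℝ)..π / 2, t ^ 2 * sin ((2 * k + 1) * t))
        + ∫ t in (0:ℝ)..π / 2, t ^ 2 / sin t * cos (2 * n * t) := by
  have hterm : ∀ k ∈ Finset.range n,
      IntervalIntegrable (fun t => 2 * (t ^ 2 * sin ((2 * k + 1) * t))) volume 0 (π / 2) :=
    fun k _ => (by fun_prop : Continuous _).intervalIntegrable _ _
  have hsum : IntervalIntegrable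
      (fun t => ∑ k ∈ Finset.range n, 2 * (t ^ 2 * sin ((2 * k + 1) * t))) volume 0 (π / 2) :=
    (by fun_prop : Continuous _).intervalIntegrable _ _
  have hrem : IntervalIntegrable (fun t => t ^ 2 / sin t * cos (2 * n * t)) volume 0 (π / 2) :=
    intervalIntegrable_sq_div_sin.mul_continuousOn (by fun_prop)
  simp_rw [← intervalIntegral.integral_const_mul]
  rw [← intervalIntegral.integral_finsetSum hterm, ← intervalIntegral.integral_add hsum hrem]
  refine intervalIntegral.integral_congr_ae (ae_of_all _ fun t ht => ?_)
  rw [uIoc_of_le (by positivity)] at ht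
  exact sq_div_sin_eq_sum_add (sin_pos_of_pos_of_lt_pi ht.1 (by linarith [ht.2, pi_pos])).ne' n

theorem hasSum_integral_sq_div_sin :
    HasSum (fun k : ℕ => 2 * (π * (-1) ^ k / (2 * k + 1) ^ 2 - 2 / (2 * k + 1) ^ 3))
      (∫ t in (0:ℝ)..π / 2, t ^ 2 / sin t) := by
  have hsummable :
      Summable (fun k : ℕ => 2 * (π * (-1) ^ k / (2 * k + 1) ^ 2 - 2 / (2 * k + 1) ^ 3)) := by
    refine (((summable_neg_one_pow_div_two_mul_add_one_sq.mul_left π).sub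
      ((summable_one_div_two_mul_add_one_pow (p := 3) (by norm_num)).mul_left 2)).mul_left 2).congr
      fun k => ?_
    ring
  have hremainder : Tendsto (fun n : ℕ => ∫ t in (0:ℝ)..π / 2, t ^ 2 / sin t * cos (2 * n * t))
      atTop (𝓝 0) := by
    have hfreq : Tendsto (fun n : ℕ => 2 * (n : ℝ)) atTop (cocompact ℝ) :=
      (tendsto_natCast_atTop_atTop.const_mul_atTop two_pos).mono_right atTop_le_cocompact
    exact intervalIntegrable_sq_div_sin.tendsto_integral_mul_cos.comp hfreq
  rw [hsummable.hasSum_iff_tendsto_nat]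
  have hpartial := (tendsto_const_nhds (x := ∫ t in (0:ℝ)..π / 2, t ^ 2 / sin t)).sub hremainder
  rw [sub_zero] at hpartial
  refine hpartial.congr fun n => ?_
  rw [integral_sq_div_sin_eq_sum_add n]
  simp only [integral_sq_mul_sin_two_mul_add_one_mul, add_sub_cancel_right]

theorem integral_sq_div_sin :
    ∫ t in (0:ℝ)..π / 2, t ^ 2 / sin t
      = 2 * π * (∑' n : ℕ, (-1 : ℝ) ^ n / (2 * n + 1) ^ 2)
        - 7 / 2 * ∑' n : ℕ, (1 : ℝ) / (n + 1) ^ 3 := by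
  have hcubes := tsum_one_div_two_mul_add_one_pow (p := 3) (by norm_num)
  have h := ((summable_neg_one_pow_div_two_mul_add_one_sq.hasSum.mul_left (2 * π)).sub
    ((summable_one_div_two_mul_add_one_pow (p := 3) (by norm_num)).hasSum.mul_left 4))
  rw [hasSum_integral_sq_div_sin.unique (h.congr_fun fun k => by ring), hcubes]
  ring

namespace LogCosHalf

noncomputable section

/-- For `u ≤ 1` and `0 ≤ cos x` the denominator is at least `1/2` (`kernel_eq`), so the `max` only
serves to make the kernel continuous on the whole plane. -/
def kernel (u x : ℝ) : ℝ := (max (1 - u * sin (x / 2) ^ 2) (1 / 2))⁻¹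

theorem continuous_kernel : Continuous (Function.uncurry kernel) :=
  (by fun_prop : Continuous fun p : ℝ × ℝ => max (1 - p.1 * sin (p.2 / 2) ^ 2) (1 / 2)).inv₀
    fun _ => (lt_of_lt_of_le one_half_pos (le_max_right _ _)).ne'

@[fun_prop]
theorem _root_.Continuous.logCosHalfKernel {α : Type*} [TopologicalSpace α] {f g : α → ℝ}
    (hf : Continuous f) (hg : Continuous g) : Continuous fun a => kernel (f a) (g a) :=
  continuous_kernel.comp (hf.prodMk hg)

theorem kernel_eq {u x : ℝ} (hu : u ≤ 1) (hx : 0 ≤ cos x) :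
    kernel u x = (1 - u * sin (x / 2) ^ 2)⁻¹ := by
  have hsin := sin_half_sq_le_half hx
  rw [kernel, max_eq_left]
  nlinarith [mul_nonneg (sub_nonneg.2 hu) (sq_nonneg (sin (x / 2)))]

theorem log_cos_half_sub_div_eq_integral_kernel {x z : ℝ} (hx : 0 ≤ cos x) (hz : 0 ≤ cos z)
    (hxz : cos x ≠ cos z) :
    (log (cos (x / 2)) - log (cos (z / 2))) / (cos x - cos z)
      = ∫ u in (0:ℝ)..1, kernel u x * kernel u z / 4 := by
  have hlog : ∀ y : ℝ, log (cos (y / 2)) = log (1 - sin (y / 2) ^ 2) / 2 := fun y => by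
    rw [← cos_sq', log_pow]
    ring
  have hp := sin_half_sq_le_half hx
  have hq := sin_half_sq_le_half hz
  have hpq : sin (x / 2) ^ 2 ≠ sin (z / 2) ^ 2 := fun h => hxz <| by
    rw [cos_eq_one_sub_two_mul_sin_half_sq x, cos_eq_one_sub_two_mul_sin_half_sq z, h]
  have hkernel : ∫ u in (0:ℝ)..1, kernel u x * kernel u z / 4
      = (∫ u in (0:ℝ)..1, ((1 - u * sin (x / 2) ^ 2) * (1 - u * sin (z / 2) ^ 2))⁻¹) / 4 := by
    rw [← intervalIntegral.integral_div]
    refine intervalIntegral.integral_congr fun u hu => ?_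
    rw [uIcc_of_le zero_le_one] at hu
    simp only [kernel_eq hu.2 hx, kernel_eq hu.2 hz, mul_inv]
  rw [hkernel, ← log_one_sub_sub_log_one_sub_div_eq_integral (by linarith) (by linarith) hpq,
    hlog, hlog, cos_eq_one_sub_two_mul_sin_half_sq x, cos_eq_one_sub_two_mul_sin_half_sq z,
    show ∀ p q : ℝ, 1 - 2 * p - (1 - 2 * q) = 2 * (q - p) from fun _ _ => by ring]
  have hqp := sub_ne_zero.2 hpq.symm
  field_simp
  ring

def kernelIntegral (u : ℝ) : ℝ := ∫ x in (0:ℝ)..π / 2, kernel u x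

@[fun_prop]
theorem continuous_kernelIntegral : Continuous kernelIntegral :=
  intervalIntegral.continuous_parametric_intervalIntegral_of_continuous' continuous_kernel _ _

theorem integral_integral_log_cos_half_div_eq :
    (∫ x in (0:ℝ)..π / 2, ∫ z in (0:ℝ)..π / 2,
      (log (cos (x / 2)) - log (cos (z / 2))) / (cos x - cos z))
      = ∫ u in (0:ℝ)..1, kernelIntegral u ^ 2 / 4 := by
  have hmem : ∀ {x : ℝ}, x ∈ uIcc 0 (π / 2) → x ∈ Icc (-(π / 2)) (π / 2) ∩ Icc 0 π := fun hx => by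
    rw [uIcc_of_le (by positivity)] at hx
    exact ⟨⟨by linarith [hx.1, pi_pos], hx.2⟩, ⟨hx.1, by linarith [hx.2, pi_pos]⟩⟩
  have hinner : ∀ x ∈ uIcc 0 (π / 2),
      (∫ z in (0:ℝ)..π / 2, (log (cos (x / 2)) - log (cos (z / 2))) / (cos x - cos z))
        = ∫ u in (0:ℝ)..1, kernel u x * kernelIntegral u / 4 := by
    intro x hx
    have hae : ∀ᵐ z, z ∈ uIoc 0 (π / 2) →
        (log (cos (x / 2)) - log (cos (z / 2))) / (cos x - cos z)
          = ∫ u in (0:ℝ)..1, kernel u x * kernel u z / 4 := by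
      filter_upwards [compl_mem_ae_iff.2 (measure_singleton x)] with z hzx hz
      have hz := hmem (uIoc_subset_uIcc hz)
      refine log_cos_half_sub_div_eq_integral_kernel (cos_nonneg_of_mem_Icc (hmem hx).1)
        (cos_nonneg_of_mem_Icc hz.1) fun h => hzx (injOn_cos (hmem hx).2 hz.2 h).symm
    rw [intervalIntegral.integral_congr_ae hae,
      intervalIntegral_swap_of_continuous (by fun_prop) _ _ _ _]
    refine intervalIntegral.integral_congr fun u _ => ?_
    rw [kernelIntegral, intervalIntegral.integral_div, intervalIntegral.integral_const_mul]
  rw [intervalIntegral.integral_congr hinner,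
    intervalIntegral_swap_of_continuous (by fun_prop) _ _ _ _]
  refine intervalIntegral.integral_congr fun u _ => ?_
  rw [intervalIntegral.integral_div, intervalIntegral.integral_mul_const, kernelIntegral, sq]

theorem kernelIntegral_one_sub_sq {s : ℝ} (hs : s ≠ 0) :
    kernelIntegral (1 - s ^ 2) = 2 * arctan s / s := by
  have hderiv : ∀ x ∈ uIcc 0 (π / 2),
      HasDerivAt (fun x => 2 / s * arctan (s * tan (x / 2))) (kernel (1 - s ^ 2) x) x := by
    intro x hx
    rw [uIcc_of_le (by positivity)] at hx
    have hcos : 0 < cos (x / 2) :=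
      cos_pos_of_mem_Ioo ⟨by linarith [hx.1, pi_pos], by linarith [hx.2, pi_pos]⟩
    refine (((hasDerivAt_tan_half hcos.ne').const_mul s).arctan.const_mul (2 / s)).congr_deriv ?_
    have hdenom : 1 - (1 - s ^ 2) * sin (x / 2) ^ 2 = cos (x / 2) ^ 2 + s ^ 2 * sin (x / 2) ^ 2 := by
      linarith [sin_sq_add_cos_sq (x / 2)]
    rw [kernel_eq (by nlinarith) (cos_nonneg_of_mem_Icc ⟨by linarith [hx.1, pi_pos], hx.2⟩),
      tan_eq_sin_div_cos, hdenom]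
    field_simp
  rw [kernelIntegral, intervalIntegral.integral_eq_sub_of_hasDerivAt hderiv
    ((by fun_prop : Continuous fun x => kernel (1 - s ^ 2) x).intervalIntegrable _ _),
    show π / 2 / 2 = π / 4 by ring, tan_pi_div_four, zero_div, tan_zero]
  simp only [mul_one, mul_zero, arctan_zero, sub_zero]
  ring

theorem integral_kernelIntegral_sq :
    ∫ u in (0:ℝ)..1, kernelIntegral u ^ 2 / 4 = (∫ t in (0:ℝ)..π / 2, t ^ 2 / sin t) / 2 := by
  have hcos : ∀ t ∈ Icc 0 (π / 2), 0 < cos (t / 2) := fun t ht =>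
    cos_pos_of_mem_Ioo ⟨by linarith [ht.1, pi_pos], by linarith [ht.2, pi_pos]⟩
  have hderiv : ∀ t ∈ Icc 0 (π / 2),
      HasDerivAt (fun t => 1 - tan (t / 2) ^ 2) (-(tan (t / 2) / cos (t / 2) ^ 2)) t := by
    intro t ht
    refine ((hasDerivAt_tan_half (hcos t ht).ne').pow 2).const_sub 1 |>.congr_deriv ?_
    ring
  have hle : (0:ℝ) ≤ π / 2 := by positivity
  have hsubst := intervalIntegral.integral_deriv_smul_comp_of_deriv_nonpos (a := 0) (b := π / 2)
    (g := fun u => kernelIntegral u ^ 2 / 4)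
    (fun t ht => (hderiv t (uIcc_of_le hle ▸ ht)).continuousAt.continuousWithinAt)
    (fun t ht => hderiv t (Ioo_subset_Icc_self (by simpa [hle] using ht)))
    (fun t ht => by
      rw [min_eq_left hle, max_eq_right hle] at ht
      have htan := tan_pos_of_pos_of_lt_pi_div_two (x := t / 2) (by linarith [ht.1])
        (by linarith [ht.2])
      exact neg_nonpos.2 (by positivity))
  have hf0 : 1 - tan ((0:ℝ) / 2) ^ 2 = 1 := by simp
  have hf1 : 1 - tan (π / 2 / 2) ^ 2 = 0 := by
    rw [show π / 2 / 2 = π / 4 by ring, tan_pi_div_four]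
    norm_num
  rw [hf0, hf1] at hsubst
  calc ∫ u in (0:ℝ)..1, kernelIntegral u ^ 2 / 4
      = -∫ u in (1:ℝ)..0, kernelIntegral u ^ 2 / 4 := by rw [intervalIntegral.integral_symm]
    _ = ∫ t in (0:ℝ)..π / 2, t ^ 2 / sin t / 2 := by
      rw [← hsubst, ← intervalIntegral.integral_neg]
      refine intervalIntegral.integral_congr_ae (ae_of_all _ fun t ht => ?_)
      rw [uIoc_of_le hle] at ht
      have hc := hcos t (Ioc_subset_Icc_self ht)
      have hs : 0 < tan (t / 2) :=
        tan_pos_of_pos_of_lt_pi_div_two (by linarith [ht.1]) (by linarith [ht.2, pi_pos])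
      have hsin : sin t = 2 * sin (t / 2) * cos (t / 2) := by
        rw [← sin_two_mul, mul_div_cancel₀ t two_ne_zero]
      simp only [Function.comp_apply, smul_eq_mul]
      rw [kernelIntegral_one_sub_sq hs.ne', arctan_tan (by linarith [ht.1, pi_pos])
        (by linarith [ht.2, pi_pos]), hsin]
      rw [tan_eq_sin_div_cos] at hs ⊢
      field_simp
      ring
    _ = (∫ t in (0:ℝ)..π / 2, t ^ 2 / sin t) / 2 := intervalIntegral.integral_div _ _

end

end LogCosHalf

theorem stmt0 :
    (∫ x in (0:ℝ)..(π/2), ∫ z in (0:ℝ)..(π/2),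
      (Real.log (Real.cos (x/2)) - Real.log (Real.cos (z/2))) / (Real.cos x - Real.cos z))
    = π * (∑' n : ℕ, (-1:ℝ)^n / (2*n+1)^2) - (7/4) * (∑' n : ℕ, (1:ℝ)/(n+1)^3) := by
  rw [LogCosHalf.integral_integral_log_cos_half_div_eq, LogCosHalf.integral_kernelIntegral_sq,
    integral_sq_div_sin]
  ring
end

section
/- For every integer n ≥ 0, the double integral over [0,π/2]² of (cos((2n+1)x) − cos((2n+1)z))/(cos x − cos z) dx dz equals π²/4 + 4·∑_{k=1}^{n} ((−1)^{k+1}/k)·∑_{m=0}^{k−1} 1/(2m+1). -/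
/-!
With `u = (x + z) / 2` and `v = (x - z) / 2`, the identities `cos x - cos z = -2 sin u sin v` and
`sin ((2n+1)θ) = sin θ · Dₙ(θ)`, where `Dₙ(θ) = 1 + 2 ∑_{j=1}^n cos 2jθ` is the Dirichlet kernel,
turn the integrand into `Dₙ(u) Dₙ(v)` off the diagonal. Expanding the product and symmetrising in
the two summation indices makes every term separable,
`cos ((j+k)x) cos ((j-k)z) + cos ((j-k)x) cos ((j+k)z)`, so the integral equals
`∑ εⱼ εₖ c(j+k) c(j-k)` with `c(p) = ∫₀^{π/2} cos (pt) dt = sin (pπ/2) / p`.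
The diagonal terms vanish except for `(0,0)`, which gives `π²/4`, and after the partial fractions
`1/(m²-k²) = (1/(m-k) + 1/(m+k)) / 2m` the terms with `max j k = m` add up to
`4 (-1)^(m+1)/m ∑_{a<m} 1/(2a+1)`.
-/

open Real Finset intervalIntegral
open MeasureTheory (volume)

noncomputable def neumannFactor (j : ℕ) : ℝ := if j = 0 then 1 else 2

noncomputable def dirichletKernel (n : ℕ) (θ : ℝ) : ℝ :=
  ∑ j ∈ range (n + 1), neumannFactor j * cos (2 * j * θ)

theorem sin_two_mul_add_one_mul_eq_sin_mul_dirichletKernel (n : ℕ) (θ : ℝ) :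
    sin ((2 * n + 1) * θ) = sin θ * dirichletKernel n θ := by
  induction n with
  | zero => simp [dirichletKernel, neumannFactor]
  | succ n ih =>
    have hstep : sin ((2 * (n + 1 : ℕ) + 1) * θ) - sin ((2 * n + 1) * θ)
        = sin θ * (2 * cos (2 * (n + 1 : ℕ) * θ)) := by
      rw [sin_sub_sin]; push_cast; ring_nf
    rw [dirichletKernel, sum_range_succ, ← dirichletKernel, mul_add, ← ih]
    simp only [neumannFactor, Nat.add_one_ne_zero, if_false]
    linear_combination hstep

theorem cos_sub_cos_eq_mul_dirichletKernel (n : ℕ) (x z : ℝ) :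
    cos ((2 * n + 1) * x) - cos ((2 * n + 1) * z) =
      (cos x - cos z) * (dirichletKernel n ((x + z) / 2) * dirichletKernel n ((x - z) / 2)) := by
  have hu : ((2 * n + 1) * x + (2 * n + 1) * z) / 2 = (2 * n + 1) * ((x + z) / 2) := by ring
  have hv : ((2 * n + 1) * x - (2 * n + 1) * z) / 2 = (2 * n + 1) * ((x - z) / 2) := by ring
  rw [cos_sub_cos, cos_sub_cos, hu, hv, sin_two_mul_add_one_mul_eq_sin_mul_dirichletKernel,
    sin_two_mul_add_one_mul_eq_sin_mul_dirichletKernel]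
  ring

theorem cos_mul_cos_add_cos_mul_cos (j k x z : ℝ) :
    cos (j * (x + z)) * cos (k * (x - z)) + cos (k * (x + z)) * cos (j * (x - z)) =
      cos ((j + k) * x) * cos ((j - k) * z) + cos ((j - k) * x) * cos ((j + k) * z) := by
  simp only [mul_add, mul_sub, add_mul, sub_mul, cos_add, cos_sub]
  ring

theorem dirichletKernel_mul_dirichletKernel (n : ℕ) (x z : ℝ) :
    dirichletKernel n ((x + z) / 2) * dirichletKernel n ((x - z) / 2) =
      ∑ p ∈ range (n + 1) ×ˢ range (n + 1), neumannFactor p.1 * neumannFactor p.2 / 2 *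
        (cos ((p.1 + p.2 : ℝ) * x) * cos ((p.1 - p.2 : ℝ) * z) +
          cos ((p.1 - p.2 : ℝ) * x) * cos ((p.1 + p.2 : ℝ) * z)) := by
  set s := range (n + 1) ×ˢ range (n + 1)
  set a : ℕ × ℕ → ℝ := fun p =>
    neumannFactor p.1 * neumannFactor p.2 * (cos (p.1 * (x + z)) * cos (p.2 * (x - z)))
  have hexpand : dirichletKernel n ((x + z) / 2) * dirichletKernel n ((x - z) / 2) =
      ∑ p ∈ s, a p := by
    simp only [dirichletKernel, sum_mul_sum, sum_product, s, a]
    refine sum_congr rfl fun j _ => sum_congr rfl fun k _ => ?_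
    ring_nf
  have hswap : ∑ p ∈ s, a p.swap = ∑ p ∈ s, a p :=
    sum_equiv (Equiv.prodComm ℕ ℕ) (by simp [s, and_comm]) (fun _ _ => rfl)
  rw [hexpand, show ∑ p ∈ s, a p = (∑ p ∈ s, a p + ∑ p ∈ s, a p.swap) / 2 by rw [hswap]; ring,
    ← sum_add_distrib, sum_div]
  refine sum_congr rfl fun p _ => ?_
  rw [← cos_mul_cos_add_cos_mul_cos]
  simp only [a, Prod.fst_swap, Prod.snd_swap]
  ring

theorem div_cos_sub_cos_eq_dirichletKernel_mul_dirichletKernel (n : ℕ) {x z : ℝ}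
    (hx : x ∈ Set.Icc 0 π) (hz : z ∈ Set.Icc 0 π) (hxz : x ≠ z) :
    (cos ((2 * n + 1) * x) - cos ((2 * n + 1) * z)) / (cos x - cos z) =
      dirichletKernel n ((x + z) / 2) * dirichletKernel n ((x - z) / 2) := by
  have hcos : cos x - cos z ≠ 0 := sub_ne_zero.mpr fun h => hxz (injOn_cos hx hz h)
  rw [cos_sub_cos_eq_mul_dirichletKernel, mul_div_cancel_left₀ _ hcos]

theorem integral_integral_sum_mul_add_mul_swap {ι : Type*} (s : Finset ι) (w : ι → ℝ)
    (f g : ι → ℝ → ℝ) {a b : ℝ} (hf : ∀ i ∈ s, IntervalIntegrable (f i) volume a b)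
    (hg : ∀ i ∈ s, IntervalIntegrable (g i) volume a b) :
    ∫ x in a..b, ∫ z in a..b, ∑ i ∈ s, w i * (f i x * g i z + g i x * f i z) =
      ∑ i ∈ s, 2 * w i * ((∫ x in a..b, f i x) * ∫ x in a..b, g i x) := by
  have hinner : ∀ x, ∫ z in a..b, ∑ i ∈ s, w i * (f i x * g i z + g i x * f i z) =
      ∑ i ∈ s, w i * (f i x * (∫ z in a..b, g i z) + g i x * ∫ z in a..b, f i z) := by
    intro x
    rw [integral_finsetSum fun i hi => (((hg i hi).const_mul _).add
      ((hf i hi).const_mul _)).const_mul _]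
    refine sum_congr rfl fun i hi => ?_
    rw [integral_const_mul, integral_add ((hg i hi).const_mul _) ((hf i hi).const_mul _),
      integral_const_mul, integral_const_mul]
  simp_rw [hinner]
  rw [integral_finsetSum fun i hi => (((hf i hi).mul_const _).add
    ((hg i hi).mul_const _)).const_mul _]
  refine sum_congr rfl fun i hi => ?_
  rw [integral_const_mul, integral_add ((hf i hi).mul_const _) ((hg i hi).mul_const _),
    integral_mul_const, integral_mul_const]
  ring

noncomputable def integralCosMul (p : ℝ) : ℝ := ∫ t in (0 : ℝ)..π / 2, cos (p * t)

theorem integralCosMul_zero : integralCosMul 0 = π / 2 := by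
  simp [integralCosMul]

theorem integralCosMul_of_ne_zero {p : ℝ} (hp : p ≠ 0) :
    integralCosMul p = sin (p * (π / 2)) / p := by
  simp [integralCosMul, integral_comp_mul_left (fun t => cos t) hp, integral_cos, div_eq_inv_mul]

theorem integralCosMul_neg (p : ℝ) : integralCosMul (-p) = integralCosMul p := by
  simp [integralCosMul, neg_mul, cos_neg]

theorem integralCosMul_nat_add_self {m : ℕ} (hm : m ≠ 0) : integralCosMul (m + m) = 0 := by
  have hmm : (m + m : ℝ) ≠ 0 := by positivity
  rw [integralCosMul_of_ne_zero hmm, show (m + m : ℝ) * (π / 2) = m * π by ring, sin_nat_mul_pi,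
    zero_div]

theorem integralCosMul_add_mul_integralCosMul_sub {m k : ℕ} (hk : k < m) :
    integralCosMul (m + k) * integralCosMul (m - k) =
      ((-1) ^ k - (-1) ^ m) / (2 * (m ^ 2 - k ^ 2)) := by
  have hkm : (k : ℝ) < m := by exact_mod_cast hk
  have hsub : (m - k : ℝ) ≠ 0 := by linarith
  have hadd : (m + k : ℝ) ≠ 0 := ne_of_gt (by linarith [k.cast_nonneg (α := ℝ)])
  have hsin :
      2 * sin ((m + k : ℝ) * (π / 2)) * sin ((m - k : ℝ) * (π / 2)) = (-1) ^ k - (-1) ^ m := by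
    rw [two_mul_sin_mul_sin, show (m + k : ℝ) * (π / 2) - (m - k) * (π / 2) = k * π by ring,
      show (m + k : ℝ) * (π / 2) + (m - k) * (π / 2) = m * π by ring, cos_nat_mul_pi,
      cos_nat_mul_pi]
  rw [integralCosMul_of_ne_zero hsub, integralCosMul_of_ne_zero hadd, div_mul_div_comm, ← hsin,
    show (m ^ 2 - k ^ 2 : ℝ) = (m + k) * (m - k) by ring]
  field_simp

theorem integralCosMul_add_mul_integralCosMul_sub_eq_mul_add {m k : ℕ} (hk : k < m) :
    integralCosMul (m + k) * integralCosMul (m - k) =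
      (-1) ^ m / (4 * m) *
        (((-1) ^ (m - k) - 1) / (m - k : ℕ) + ((-1) ^ (m + k) - 1) / (m + k : ℕ)) := by
  rw [integralCosMul_add_mul_integralCosMul_sub hk]
  obtain ⟨e, rfl⟩ := Nat.exists_eq_add_of_le hk.le
  have he : (e : ℝ) ≠ 0 := by exact_mod_cast (show e ≠ 0 by omega)
  have hke : (2 * k + e : ℝ) ≠ 0 := ne_of_gt (by positivity)
  have hsq : ((-1 : ℝ) ^ e) ^ 2 = 1 := by rw [← pow_mul, mul_comm, pow_mul, neg_one_sq, one_pow]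
  rw [Nat.add_sub_cancel_left, show k + e + k = 2 * k + e by ring, pow_add, pow_add, pow_mul,
    neg_one_sq, one_pow, one_mul]
  push_cast
  rw [show ((k : ℝ) + e) ^ 2 - k ^ 2 = e * (2 * k + e) by ring]
  field_simp
  linear_combination (-4 * ((k : ℝ) + e)) * hsq

theorem integral_integral_div_cos_sub_cos (n : ℕ) :
    (∫ x in (0 : ℝ)..(π / 2), ∫ z in (0 : ℝ)..(π / 2),
      (cos ((2 * n + 1) * x) - cos ((2 * n + 1) * z)) / (cos x - cos z)) =
      ∑ p ∈ range (n + 1) ×ˢ range (n + 1), neumannFactor p.1 * neumannFactor p.2 *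
        (integralCosMul (p.1 + p.2) * integralCosMul (p.1 - p.2)) := by
  have hpi : (0 : ℝ) ≤ π / 2 := by positivity
  have hsub : Set.Icc (0 : ℝ) (π / 2) ⊆ Set.Icc 0 π :=
    Set.Icc_subset_Icc_right (by linarith [pi_pos])
  calc _ = ∫ x in (0 : ℝ)..(π / 2), ∫ z in (0 : ℝ)..(π / 2),
        dirichletKernel n ((x + z) / 2) * dirichletKernel n ((x - z) / 2) := by
        refine integral_congr fun x hx => integral_congr_ae ?_
        rw [Set.uIcc_of_le hpi] at hx
        filter_upwards [MeasureTheory.Measure.ae_ne volume x] with z hzx hz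
        rw [Set.uIoc_of_le hpi] at hz
        exact div_cos_sub_cos_eq_dirichletKernel_mul_dirichletKernel n (hsub hx)
          (hsub (Set.Ioc_subset_Icc_self hz)) hzx.symm
    _ = _ := by
        simp_rw [dirichletKernel_mul_dirichletKernel]
        have hseparate := integral_integral_sum_mul_add_mul_swap (range (n + 1) ×ˢ range (n + 1))
          (fun p => neumannFactor p.1 * neumannFactor p.2 / 2)
          (fun p t => cos ((p.1 + p.2 : ℝ) * t)) (fun p t => cos ((p.1 - p.2 : ℝ) * t))
          (a := 0) (b := π / 2) (fun _ _ => (by fun_prop : Continuous _).intervalIntegrable _ _)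
          (fun _ _ => (by fun_prop : Continuous _).intervalIntegrable _ _)
        rw [hseparate]
        refine sum_congr rfl fun p _ => ?_
        simp only [integralCosMul]
        ring

theorem sum_range_neumannFactor_mul_add {h : ℕ → ℝ} (h0 : h 0 = 0) (m : ℕ) :
    ∑ k ∈ range m, neumannFactor k * (h (m - k) + h (m + k)) = 2 * ∑ i ∈ range (2 * m), h i := by
  rcases Nat.eq_zero_or_pos m with rfl | hm
  · simp
  have hfactor : ∀ k ∈ range m, neumannFactor k * (h (m - k) + h (m + k)) =
      2 * (h (m - k) + h (m + k)) - if k = 0 then 2 * h m else 0 := by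
    intro k _
    rcases eq_or_ne k 0 with rfl | hk
    · simp only [neumannFactor, if_true, Nat.sub_zero, add_zero]
      ring
    · simp only [neumannFactor, if_neg hk, sub_zero]
  have hreflect : ∑ k ∈ range m, h (m - k) = ∑ k ∈ range m, h k + h m := by
    calc ∑ k ∈ range m, h (m - k) = ∑ k ∈ range m, h (m - 1 - k + 1) :=
          sum_congr rfl fun k hk => by rw [mem_range] at hk; congr 1; omega
      _ = ∑ k ∈ range m, h (k + 1) := sum_range_reflect (fun j => h (j + 1)) m
      _ = _ := by rw [← add_zero (∑ k ∈ range m, h (k + 1)), ← h0, ← sum_range_succ',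
                    sum_range_succ]
  rw [sum_congr rfl hfactor, sum_sub_distrib, sum_ite_eq' _ _ , if_pos (mem_range.mpr hm),
    ← mul_sum, sum_add_distrib, hreflect, two_mul m, sum_range_add]
  ring

theorem sum_range_two_mul_neg_one_pow_sub_one_div (m : ℕ) :
    ∑ i ∈ range (2 * m), ((-1 : ℝ) ^ i - 1) / i = -2 * ∑ a ∈ range m, 1 / (2 * a + 1 : ℝ) := by
  induction m with
  | zero => simp
  | succ m ih =>
    rw [show 2 * (m + 1) = 2 * m + 1 + 1 by ring, sum_range_succ, sum_range_succ, ih,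
      sum_range_succ, pow_succ, pow_mul]
    simp only [neg_one_sq, one_pow, sub_self, zero_div, Nat.cast_add, Nat.cast_mul,
      Nat.cast_ofNat, Nat.cast_one]
    ring

theorem sum_range_neumannFactor_mul_integralCosMul (m : ℕ) :
    ∑ k ∈ range m, neumannFactor k * (integralCosMul (m + k) * integralCosMul (m - k)) =
      (-1) ^ (m + 1) / m * ∑ a ∈ range m, 1 / (2 * a + 1 : ℝ) := by
  -- `g 0 = 0` because `x / 0 = 0`
  set g : ℕ → ℝ := fun i => ((-1) ^ i - 1) / i
  calc _ = ∑ k ∈ range m, (-1) ^ m / (4 * m) * (neumannFactor k * (g (m - k) + g (m + k))) :=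
        sum_congr rfl fun k hk => by
          rw [integralCosMul_add_mul_integralCosMul_sub_eq_mul_add (mem_range.mp hk)]; ring
    _ = (-1) ^ m / (4 * m) * (2 * ∑ i ∈ range (2 * m), g i) := by
        rw [← mul_sum, sum_range_neumannFactor_mul_add (by simp [g])]
    _ = _ := by
        rw [sum_range_two_mul_neg_one_pow_sub_one_div, pow_succ]
        ring

theorem sum_range_succ_product_range_succ {M : Type*} [AddCommMonoid M] (f : ℕ × ℕ → M) (m : ℕ) :
    ∑ p ∈ range (m + 1) ×ˢ range (m + 1), f p =
      ∑ p ∈ range m ×ˢ range m, f p + ∑ k ∈ range m, (f (m, k) + f (k, m)) + f (m, m) := by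
  simp only [sum_product, sum_range_succ, sum_add_distrib]
  abel

theorem sum_neumannFactor_mul_integralCosMul (n : ℕ) :
    ∑ p ∈ range (n + 1) ×ˢ range (n + 1), neumannFactor p.1 * neumannFactor p.2 *
        (integralCosMul (p.1 + p.2) * integralCosMul (p.1 - p.2)) =
      π ^ 2 / 4 + 4 * ∑ k ∈ Icc 1 n, ((-1 : ℝ) ^ (k + 1) / k) *
        ∑ m ∈ range k, (1 : ℝ) / (2 * m + 1) := by
  induction n with
  | zero => norm_num [neumannFactor, integralCosMul_zero, ← sq, div_pow]
  | succ n ih =>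
    have hm : n + 1 ≠ 0 := n.succ_ne_zero
    have hrow : ∀ k ∈ range (n + 1),
        neumannFactor (n + 1) * neumannFactor k *
            (integralCosMul ((n + 1 : ℕ) + k) * integralCosMul ((n + 1 : ℕ) - k)) +
          neumannFactor k * neumannFactor (n + 1) *
            (integralCosMul (k + (n + 1 : ℕ)) * integralCosMul (k - (n + 1 : ℕ))) =
        4 * (neumannFactor k * (integralCosMul ((n + 1 : ℕ) + k) *
          integralCosMul ((n + 1 : ℕ) - k))) := by
      intro k _
      rw [add_comm (k : ℝ), ← neg_sub, integralCosMul_neg, neumannFactor, if_neg hm]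
      ring
    rw [sum_range_succ_product_range_succ, ih, sum_congr rfl hrow, ← mul_sum,
      sum_range_neumannFactor_mul_integralCosMul, integralCosMul_nat_add_self hm,
      sum_Icc_succ_top (by omega)]
    ring

theorem stmt6 (n : ℕ) :
    (∫ x in (0:ℝ)..(π/2), ∫ z in (0:ℝ)..(π/2),
      (Real.cos ((2*n+1)*x) - Real.cos ((2*n+1)*z)) / (Real.cos x - Real.cos z))
    = π^2/4 + 4 * ∑ k ∈ Finset.Icc 1 n, ((-1:ℝ)^(k+1) / k) *
        ∑ m ∈ Finset.range k, (1:ℝ)/(2*m+1) := by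
  rw [integral_integral_div_cos_sub_cos, sum_neumannFactor_mul_integralCosMul]
end

section
/- The integral ∫₀¹ log(1−x²)/(1+x²) dx equals (π/4)·log 2 − G, where G is Catalan's constant. -/
open Real MeasureTheory Set
open intervalIntegral (intervalIntegrable_log' intervalIntegrable_inv_one_add_sq)

/-!
The substitution `x ↦ (1 - x) / (1 + x)` maps `[0, 1]` onto itself and preserves
`dx / (1 + x²)`. It turns `log (1 - x²)` into `log (4x / (1 + x)²)`, so the integral equals
`(π/2) log 2 + ∫₀¹ log x / (1 + x²) - 2 ∫₀¹ log (1 + x) / (1 + x²)`. The same substitution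
sends `log (1 + x)` to `log 2 - log (1 + x)`, which gives
`∫₀¹ log (1 + x) / (1 + x²) = (π/8) log 2`. Finally, expanding `1 / (1 + x²)` as a geometric
series and using `∫₀¹ x²ⁿ log x = -1 / (2n + 1)²` gives `∫₀¹ log x / (1 + x²) = -G`.
-/

-- Writing `x = tan θ`, the substitution is `θ ↦ π/4 - θ`, and `dx / (1 + x²) = dθ`.
theorem integral_comp_cayley_div_one_add_sq (h : ℝ → ℝ) :
    ∫ x in (0:ℝ)..1, h ((1 - x) / (1 + x)) / (1 + x ^ 2) =
      ∫ x in (0:ℝ)..1, h x / (1 + x ^ 2) := by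
  have hsubst := intervalIntegral.integral_comp_mul_deriv_of_deriv_nonpos (a := 0) (b := 1)
    (f := fun x => (1 - x) / (1 + x)) (f' := fun x => -2 / (1 + x) ^ 2)
    (g := fun u => h u / (1 + u ^ 2)) ?cont ?deriv ?nonpos
  case cont =>
    exact ContinuousOn.div (by fun_prop) (by fun_prop) fun x hx => by
      rw [uIcc_of_le zero_le_one] at hx; linarith [hx.1]
  case deriv =>
    intro x hx
    simp only [zero_le_one, min_eq_left, max_eq_right] at hx
    have hx1 : 1 + x ≠ 0 := by linarith [hx.1]
    refine (((hasDerivAt_id x).const_sub 1).div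
      ((hasDerivAt_id x).const_add 1) hx1).congr_deriv ?_
    simp only [id]; field_simp; ring
  case nonpos =>
    intro x _
    exact div_nonpos_of_nonpos_of_nonneg (by norm_num) (sq_nonneg _)
  norm_num only [Function.comp] at hsubst
  rw [← neg_neg (∫ x in (0:ℝ)..1, h x / (1 + x ^ 2)), ← intervalIntegral.integral_symm, ← hsubst,
    ← intervalIntegral.integral_neg]
  refine intervalIntegral.integral_congr fun x hx => ?_
  rw [uIcc_of_le zero_le_one] at hx
  have hx1 : 1 + x ≠ 0 := by linarith [hx.1]
  field_simp
  ring

theorem log_one_add_cayley {x : ℝ} (hx : 1 + x ≠ 0) :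
    log (1 + (1 - x) / (1 + x)) = log 2 - log (1 + x) := by
  rw [← log_div two_ne_zero hx]
  congr 1
  field_simp
  ring

theorem log_one_sub_sq_cayley {x : ℝ} (hx₀ : x ≠ 0) (hx₁ : 1 + x ≠ 0) :
    log (1 - ((1 - x) / (1 + x)) ^ 2) = 2 * log 2 + log x - 2 * log (1 + x) := by
  have h : 1 - ((1 - x) / (1 + x)) ^ 2 = 2 ^ 2 * x / (1 + x) ^ 2 := by
    field_simp
    ring
  rw [h, log_div (by positivity) (by positivity), log_mul (by positivity) hx₀, log_pow, log_pow]
  push_cast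
  ring

theorem IntervalIntegrable.div_one_add_sq {f : ℝ → ℝ} {a b : ℝ}
    (hf : IntervalIntegrable f volume a b) :
    IntervalIntegrable (fun x => f x / (1 + x ^ 2)) volume a b := by
  simpa only [div_eq_mul_inv] using hf.mul_continuousOn (g := fun x => (1 + x ^ 2)⁻¹)
    (Continuous.continuousOn (by fun_prop (disch := intro; positivity)))

theorem intervalIntegrable_log_one_add_div_one_add_sq :
    IntervalIntegrable (fun x => log (1 + x) / (1 + x ^ 2)) volume 0 1 := by
  refine IntervalIntegrable.div_one_add_sq ?_
  convert (intervalIntegrable_log' (a := 1) (b := 2)).comp_add_left 1 <;> norm_num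

theorem integral_log_one_add_div_one_add_sq :
    ∫ x in (0:ℝ)..1, log (1 + x) / (1 + x ^ 2) = π / 8 * log 2 := by
  have hsymm := integral_comp_cayley_div_one_add_sq fun u => log (1 + u)
  have hsplit : ∫ x in (0:ℝ)..1, log (1 + (1 - x) / (1 + x)) / (1 + x ^ 2)
      = ∫ x in (0:ℝ)..1, (log 2 * (1 + x ^ 2)⁻¹ - log (1 + x) / (1 + x ^ 2)) := by
    refine intervalIntegral.integral_congr fun x hx => ?_
    rw [uIcc_of_le zero_le_one] at hx
    rw [log_one_add_cayley (by linarith [hx.1])]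
    ring
  rw [hsplit, intervalIntegral.integral_sub (intervalIntegrable_inv_one_add_sq.const_mul _)
      intervalIntegrable_log_one_add_div_one_add_sq,
    intervalIntegral.integral_const_mul, integral_inv_one_add_sq, arctan_one, arctan_zero] at hsymm
  linarith

theorem integral_pow_mul_log (k : ℕ) :
    ∫ x in (0:ℝ)..1, x ^ k * log x = -1 / (k + 1) ^ 2 := by
  set F : ℝ → ℝ := fun x => x ^ (k + 1) * log x / (k + 1) - x ^ (k + 1) / (k + 1) ^ 2 with hF
  have hcont : Continuous F := by
    have hF' : F = fun x => x ^ k * (x * log x) / (k + 1) - x ^ (k + 1) / (k + 1) ^ 2 := by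
      ext x; ring
    rw [hF']
    exact ((continuous_pow k).mul continuous_mul_log).div_const _ |>.sub
      ((continuous_pow _).div_const _)
  have hderiv : ∀ x ∈ Ioo (0:ℝ) 1, HasDerivAt F (x ^ k * log x) x := by
    intro x hx
    refine ((((hasDerivAt_pow (k + 1) x).mul (hasDerivAt_log hx.1.ne')).div_const (k + 1)).sub
      ((hasDerivAt_pow (k + 1) x).div_const ((k + 1) ^ 2))).congr_deriv ?_
    have hx : x ≠ 0 := hx.1.ne'
    simp only [Nat.add_sub_cancel, Nat.cast_add_one]
    field_simp
    ring
  rw [intervalIntegral.integral_eq_sub_of_hasDerivAt_of_le zero_le_one hcont.continuousOn hderiv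
    (intervalIntegrable_log'.continuousOn_mul (continuous_pow k).continuousOn)]
  simp [hF]
  ring

theorem summable_one_div_two_mul_add_one_sq :
    Summable fun n : ℕ => 1 / (2 * n + 1 : ℝ) ^ 2 := by
  have h := (Real.summable_one_div_nat_pow.mpr one_lt_two).comp_injective
    (i := fun n : ℕ => 2 * n + 1) fun m n hmn => by simpa using hmn
  simpa [Function.comp_def] using h

theorem hasSum_integral_log_div_one_add_sq :
    HasSum (fun n : ℕ => (-1) ^ n / (2 * n + 1 : ℝ) ^ 2)
      (-∫ x in (0:ℝ)..1, log x / (1 + x ^ 2)) := by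
  have hint (n : ℕ) : IntegrableOn (fun x : ℝ => x ^ (2 * n) * log x) (Ioo 0 1) :=
    (intervalIntegrable_iff_integrableOn_Ioo_of_le zero_le_one).mp
      (intervalIntegrable_log'.continuousOn_mul (continuous_pow _).continuousOn)
  have hterm (n : ℕ) : ∫ x in Ioo 0 1, x ^ (2 * n) * log x = -1 / (2 * n + 1) ^ 2 := by
    rw [← integral_Ioc_eq_integral_Ioo, ← intervalIntegral.integral_of_le zero_le_one,
      integral_pow_mul_log]
    push_cast
    ring
  have hnorm (n : ℕ) :
      ∫ x in Ioo 0 1, ‖(-1) ^ n * (x ^ (2 * n) * log x)‖ = 1 / (2 * n + 1) ^ 2 := by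
    rw [← neg_neg (1 / _), ← neg_div, ← hterm, ← integral_neg]
    refine setIntegral_congr_fun measurableSet_Ioo fun x hx => ?_
    rw [norm_mul, norm_pow, norm_neg, norm_one, one_pow, one_mul, Real.norm_of_nonpos
      (mul_nonpos_of_nonneg_of_nonpos (pow_nonneg hx.1.le _) (log_nonpos hx.1.le hx.2.le))]
  have hgeom (x : ℝ) (hx : x ∈ Ioo 0 1) :
      HasSum (fun n : ℕ => (-1) ^ n * (x ^ (2 * n) * log x)) (log x / (1 + x ^ 2)) := by
    have hx2 : |-x ^ 2| < 1 := by
      rw [abs_neg, abs_of_nonneg (sq_nonneg x)]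
      nlinarith [hx.1, hx.2]
    simpa [div_eq_inv_mul, sub_eq_add_neg, neg_pow (x ^ 2), ← pow_mul, mul_assoc] using
      (hasSum_geometric_of_abs_lt_one hx2).mul_right (log x)
  have hterm' (n : ℕ) : -∫ x in Ioo 0 1, (-1) ^ n * (x ^ (2 * n) * log x)
      = (-1) ^ n / (2 * n + 1 : ℝ) ^ 2 := by
    rw [integral_const_mul, hterm]
    ring
  have h := hasSum_integral_of_summable_integral_norm (fun n => (hint n).const_mul ((-1) ^ n))
    (summable_one_div_two_mul_add_one_sq.congr fun n => (hnorm n).symm)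
  rw [intervalIntegral.integral_of_le zero_le_one, integral_Ioc_eq_integral_Ioo,
    setIntegral_congr_fun measurableSet_Ioo fun x hx => (hgeom x hx).tsum_eq.symm]
  simpa only [hterm'] using h.neg

theorem stmt8 :
    (∫ x in (0:ℝ)..1, Real.log (1 - x^2) / (1 + x^2))
    = (π/4) * Real.log 2 - (∑' n : ℕ, (-1:ℝ)^n / (2*n+1)^2) := by
  have hsplit : ∫ x in (0:ℝ)..1, log (1 - x ^ 2) / (1 + x ^ 2)
      = ∫ x in (0:ℝ)..1, (2 * log 2 * (1 + x ^ 2)⁻¹ + log x / (1 + x ^ 2)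
          - 2 * (log (1 + x) / (1 + x ^ 2))) := by
    rw [← integral_comp_cayley_div_one_add_sq]
    refine intervalIntegral.integral_congr_ae (ae_of_all _ fun x hx => ?_)
    rw [uIoc_of_le zero_le_one] at hx
    rw [log_one_sub_sq_cayley hx.1.ne' (by linarith [hx.1])]
    ring
  rw [hsplit, intervalIntegral.integral_sub
      ((intervalIntegrable_inv_one_add_sq.const_mul _).add
        intervalIntegrable_log'.div_one_add_sq)
      (intervalIntegrable_log_one_add_div_one_add_sq.const_mul _),
    intervalIntegral.integral_add (intervalIntegrable_inv_one_add_sq.const_mul _)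
      intervalIntegrable_log'.div_one_add_sq,
    intervalIntegral.integral_const_mul, intervalIntegral.integral_const_mul,
    integral_inv_one_add_sq, integral_log_one_add_div_one_add_sq,
    hasSum_integral_log_div_one_add_sq.tsum_eq, arctan_one, arctan_zero]
  ring
end

section
/- For all n ≥ 1 and |z| < 1, the double integral over [0,π]² of (Li_n(z cos θ₁) − Li_n(z cos θ₂))/(cos θ₁ − cos θ₂) dθ₁ dθ₂ equals (π²/2)·(Li_n(z) − Li_n(−z)). -/
/-!
Expand `Li_n(z c)` in powers of `c`. The difference quotient of `c ↦ c^(k+1)` is the complete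
homogeneous polynomial `∑_{i ≤ k} c₁^i c₂^(k-i)`, so after exchanging the sum with both integrals
the `k`-th term contributes `z^(k+1)/(k+1)^n · ∑_{i ≤ k} W_i W_(k-i)` with `W_m = ∫₀^π cos^m`.
Odd moments vanish and `W_(2a) = π · (2a choose a)/4^a`, so the convolution is `π²` for even `k` and
`0` for odd `k`, by the classical identity `∑_a (2a choose a)(2b choose b) = 4^m` over `a + b = m`.
Summing over even `k` gives `(π²/2)(Li_n(z) - Li_n(-z))`.
-/

open Real Finset MeasureTheory

noncomputable def Li (n : ℕ) (z : ℝ) : ℝ := ∑' k : ℕ, z^(k+1) / (k+1)^n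

noncomputable def wallisRatio (m : ℕ) : ℝ := ∏ i ∈ range m, (2 * (i : ℝ) + 1) / (2 * i + 2)

lemma wallisRatio_zero : wallisRatio 0 = 1 := by simp [wallisRatio]

lemma wallisRatio_succ (m : ℕ) :
    wallisRatio (m + 1) = wallisRatio m * ((2 * m + 1) / (2 * m + 2)) :=
  prod_range_succ _ m

lemma wallisRatio_pos (m : ℕ) : 0 < wallisRatio m := prod_pos fun _ _ => by positivity

lemma sum_range_wallisRatio_mul (m : ℕ) :
    ∑ i ∈ range (m + 1), wallisRatio i * wallisRatio (m - i) = 1 := by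
  induction m with
  | zero => simp [wallisRatio_zero]
  | succ m ih =>
    -- Telescoping certificate: `g (i+1) - g i` is how much the `i`-th term grows from `m` to `m+1`.
    set g : ℕ → ℝ := fun i => -(i * wallisRatio i * wallisRatio (m + 1 - i)) / (m + 1) with hg
    have step : ∀ i ∈ range (m + 1), wallisRatio i * wallisRatio (m + 1 - i)
        = wallisRatio i * wallisRatio (m - i) + (g (i + 1) - g i) := by
      intro i hi
      obtain ⟨j, rfl⟩ : ∃ j, m = i + j := ⟨m - i, by grind⟩
      simp only [hg, show i + j + 1 - i = j + 1 by omega, show i + j - i = j by omega,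
        show i + j + 1 - (i + 1) = j by omega, wallisRatio_succ]
      have := (wallisRatio_pos i).ne'
      have := (wallisRatio_pos j).ne'
      push_cast
      field_simp
      ring
    rw [sum_range_succ, Nat.sub_self, sum_congr rfl step, sum_add_distrib, sum_range_sub, ih]
    simp only [hg, Nat.sub_self, wallisRatio_zero, wallisRatio_succ m]
    field_simp
    push_cast
    ring

lemma sum_range_two_mul_add_one_of_odd_eq_zero {M : Type*} [AddCommMonoid M] {f : ℕ → M}
    (hf : ∀ i, f (2 * i + 1) = 0) (m : ℕ) :
    ∑ i ∈ range (2 * m + 1), f i = ∑ a ∈ range (m + 1), f (2 * a) := by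
  induction m with
  | zero => simp
  | succ m ih =>
    rw [show 2 * (m + 1) + 1 = 2 * m + 1 + 1 + 1 by ring, sum_range_succ, sum_range_succ, ih, hf,
      add_zero, sum_range_succ (n := m + 1)]
    rfl

noncomputable def cosMoment (m : ℕ) : ℝ := ∫ x in (0 : ℝ)..π, cos x ^ m

lemma cosMoment_add_two (m : ℕ) : cosMoment (m + 2) = (m + 1) / (m + 2) * cosMoment m := by
  simp [cosMoment, integral_cos_pow]

lemma cosMoment_two_mul (a : ℕ) : cosMoment (2 * a) = π * wallisRatio a := by
  induction a with
  | zero => simp [cosMoment, wallisRatio_zero]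
  | succ a ih =>
    rw [show 2 * (a + 1) = 2 * a + 2 by ring, cosMoment_add_two, ih, wallisRatio_succ]
    push_cast
    ring

lemma cosMoment_two_mul_add_one (a : ℕ) : cosMoment (2 * a + 1) = 0 := by
  induction a with
  | zero => simp [cosMoment]
  | succ a ih => rw [show 2 * (a + 1) + 1 = 2 * a + 1 + 2 by ring, cosMoment_add_two, ih, mul_zero]

lemma sum_range_cosMoment_mul (k : ℕ) :
    ∑ i ∈ range (k + 1), cosMoment i * cosMoment (k - i) = if Even k then π ^ 2 else 0 := by
  obtain ⟨m, rfl | rfl⟩ := Nat.even_or_odd' k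
  · rw [if_pos (even_two_mul m), sum_range_two_mul_add_one_of_odd_eq_zero
      (fun i => by rw [cosMoment_two_mul_add_one, zero_mul])]
    calc ∑ a ∈ range (m + 1), cosMoment (2 * a) * cosMoment (2 * m - 2 * a)
        = π ^ 2 * ∑ a ∈ range (m + 1), wallisRatio a * wallisRatio (m - a) := by
          rw [mul_sum]
          refine sum_congr rfl fun a _ => ?_
          rw [← Nat.mul_sub, cosMoment_two_mul, cosMoment_two_mul]
          ring
      _ = π ^ 2 := by rw [sum_range_wallisRatio_mul, mul_one]
  · rw [if_neg (Nat.not_even_iff_odd.mpr (odd_two_mul_add_one m))]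
    refine sum_eq_zero fun i hi => ?_
    obtain ⟨b, rfl | rfl⟩ := Nat.even_or_odd' i
    · rw [show 2 * m + 1 - 2 * b = 2 * (m - b) + 1 by grind,
        cosMoment_two_mul_add_one, mul_zero]
    · rw [cosMoment_two_mul_add_one, zero_mul]

lemma integral_integral_sum_cos_pow_mul_cos_pow (k : ℕ) :
    ∫ x in (0 : ℝ)..π, ∫ y in (0 : ℝ)..π, ∑ i ∈ range (k + 1), cos x ^ i * cos y ^ (k - i)
      = if Even k then π ^ 2 else 0 := by
  have inner (x : ℝ) : ∫ y in (0 : ℝ)..π, ∑ i ∈ range (k + 1), cos x ^ i * cos y ^ (k - i)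
      = ∑ i ∈ range (k + 1), cos x ^ i * cosMoment (k - i) := by
    rw [intervalIntegral.integral_finsetSum fun i _ => Continuous.intervalIntegrable
      (by fun_prop : Continuous fun y => cos x ^ i * cos y ^ (k - i)) _ _]
    simp only [intervalIntegral.integral_const_mul, cosMoment]
  rw [← sum_range_cosMoment_mul, intervalIntegral.integral_congr fun x _ => inner x,
    intervalIntegral.integral_finsetSum fun i _ => Continuous.intervalIntegrable
      (by fun_prop : Continuous fun x => cos x ^ i * cosMoment (k - i)) _ _]
  simp only [intervalIntegral.integral_mul_const, cosMoment]

section TsumIntegral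

variable {ι E : Type*} [Countable ι] [NormedAddCommGroup E] [NormedSpace ℝ E] [CompleteSpace E]
  {B : ι → ℝ}

theorem intervalIntegral_tsum_of_norm_le {a b : ℝ} {F : ι → ℝ → E} (hF : ∀ i, Continuous (F i))
    (hFB : ∀ i t, ‖F i t‖ ≤ B i) (hB : Summable B) :
    ∫ t in a..b, ∑' i, F i t = ∑' i, ∫ t in a..b, F i t :=
  (intervalIntegral.hasSum_integral_of_dominated_convergence (fun i _ => B i)
    (fun i => (hF i).aestronglyMeasurable) (fun i => ae_of_all _ fun t _ => hFB i t)
    (ae_of_all _ fun _ _ => hB) intervalIntegrable_const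
    (ae_of_all _ fun t _ => (hB.of_norm_bounded fun i => hFB i t).hasSum)).tsum_eq.symm

theorem intervalIntegral_intervalIntegral_tsum_of_norm_le {a b c d : ℝ} {F : ι → ℝ → ℝ → E}
    (hF : ∀ i, Continuous (Function.uncurry (F i))) (hFB : ∀ i x y, ‖F i x y‖ ≤ B i)
    (hB : Summable B) :
    ∫ x in a..b, ∫ y in c..d, ∑' i, F i x y = ∑' i, ∫ x in a..b, ∫ y in c..d, F i x y := by
  have inner (x : ℝ) : ∫ y in c..d, ∑' i, F i x y = ∑' i, ∫ y in c..d, F i x y :=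
    intervalIntegral_tsum_of_norm_le (fun i => (hF i).comp (Continuous.prodMk_right x))
      (hFB · x) hB
  simp only [inner]
  exact intervalIntegral_tsum_of_norm_le
    (fun i => intervalIntegral.continuous_parametric_intervalIntegral_of_continuous' (hF i) c d)
    (fun i x => intervalIntegral.norm_integral_le_of_norm_le_const fun y _ => hFB i x y)
    (hB.mul_right _)

end TsumIntegral

lemma abs_pow_succ_div_le (n k : ℕ) (w : ℝ) :
    |w ^ (k + 1) / ((k : ℝ) + 1) ^ n| ≤ |w| ^ (k + 1) := by
  rw [abs_div, abs_pow, abs_of_pos (by positivity : (0 : ℝ) < ((k : ℝ) + 1) ^ n)]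
  exact div_le_self (by positivity) (one_le_pow₀ (by simp))

lemma summable_pow_succ_div_succ_pow (n : ℕ) {w : ℝ} (hw : |w| < 1) :
    Summable fun k : ℕ => w ^ (k + 1) / ((k : ℝ) + 1) ^ n :=
  ((summable_geometric_of_lt_one (abs_nonneg w) hw).mul_left |w|).of_norm_bounded fun k => by
    rw [Real.norm_eq_abs, ← pow_succ']
    exact abs_pow_succ_div_le n k w

lemma Li_mul_sub_Li_mul_div (n : ℕ) {z c₁ c₂ : ℝ} (hz : |z| < 1) (h₁ : |c₁| ≤ 1) (h₂ : |c₂| ≤ 1)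
    (hc : c₁ ≠ c₂) :
    (Li n (z * c₁) - Li n (z * c₂)) / (c₁ - c₂)
      = ∑' k : ℕ, z ^ (k + 1) / ((k : ℝ) + 1) ^ n * ∑ i ∈ range (k + 1), c₁ ^ i * c₂ ^ (k - i) := by
  have hzc {c : ℝ} (h : |c| ≤ 1) : |z * c| < 1 := by
    rw [abs_mul]; nlinarith [abs_nonneg z, abs_nonneg c]
  rw [Li, Li, ← (summable_pow_succ_div_succ_pow n (hzc h₁)).tsum_sub
    (summable_pow_succ_div_succ_pow n (hzc h₂)), ← tsum_div_const]
  refine tsum_congr fun k => ?_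
  have hgeom : (∑ i ∈ range (k + 1), c₁ ^ i * c₂ ^ (k - i)) * (c₁ - c₂)
      = c₁ ^ (k + 1) - c₂ ^ (k + 1) := by
    simpa using geom_sum₂_mul c₁ c₂ (k + 1)
  rw [div_eq_iff (sub_ne_zero.mpr hc), mul_assoc, hgeom]
  ring

lemma Li_sub_Li_neg (n : ℕ) {w : ℝ} (hw : |w| < 1) :
    Li n w - Li n (-w) = ∑' k : ℕ, w ^ (k + 1) / ((k : ℝ) + 1) ^ n * if Even k then 2 else 0 := by
  rw [Li, Li, ← (summable_pow_succ_div_succ_pow n hw).tsum_sub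
    (summable_pow_succ_div_succ_pow n (by rwa [abs_neg]))]
  refine tsum_congr fun k => ?_
  by_cases hk : Even k
  · rw [if_pos hk, (Even.add_one hk).neg_pow]; ring
  · rw [if_neg hk, (Nat.even_add_one.mpr hk).neg_pow]; ring

lemma summable_succ_mul_pow_succ {r : ℝ} (hr : |r| < 1) :
    Summable fun k : ℕ => ((k : ℝ) + 1) * |r| ^ (k + 1) := by
  have h := summable_pow_mul_geometric_of_norm_lt_one (R := ℝ) 1 (r := |r|) (by simpa using hr)
  exact ((summable_nat_add_iff 1).mpr h).congr fun k => by push_cast; ring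

lemma abs_sum_pow_mul_pow_le {c₁ c₂ : ℝ} (h₁ : |c₁| ≤ 1) (h₂ : |c₂| ≤ 1) (k : ℕ) :
    |∑ i ∈ range (k + 1), c₁ ^ i * c₂ ^ (k - i)| ≤ k + 1 := by
  calc |∑ i ∈ range (k + 1), c₁ ^ i * c₂ ^ (k - i)|
      ≤ ∑ i ∈ range (k + 1), |c₁ ^ i * c₂ ^ (k - i)| := abs_sum_le_sum_abs _ _
    _ ≤ ∑ i ∈ range (k + 1), (1 : ℝ) := sum_le_sum fun i _ => by
        rw [abs_mul, abs_pow, abs_pow]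
        exact mul_le_one₀ (pow_le_one₀ (abs_nonneg _) h₁) (by positivity)
          (pow_le_one₀ (abs_nonneg _) h₂)
    _ = k + 1 := by simp

lemma integral_Li_sub_Li_div_cos_sub_cos (n : ℕ) {z : ℝ} (hz : |z| < 1) (x : ℝ) :
    ∫ y in (0 : ℝ)..π, (Li n (z * cos x) - Li n (z * cos y)) / (cos x - cos y)
      = ∫ y in (0 : ℝ)..π, ∑' k : ℕ, z ^ (k + 1) / ((k : ℝ) + 1) ^ n *
          ∑ i ∈ range (k + 1), cos x ^ i * cos y ^ (k - i) := by
  refine intervalIntegral.integral_congr_ae ?_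
  have hdiag : ∀ᵐ y : ℝ, y ≠ arccos (cos x) := compl_mem_ae_iff.mpr (measure_singleton _)
  filter_upwards [hdiag] with y hy hyI
  rw [Set.uIoc_of_le pi_pos.le] at hyI
  have hcos : cos x ≠ cos y := fun h => hy (by rw [h, arccos_cos hyI.1.le hyI.2])
  exact Li_mul_sub_Li_mul_div n hz (abs_cos_le_one x) (abs_cos_le_one y) hcos

theorem stmt12_general (n : ℕ) (z : ℝ) (hz : |z| < 1) :
    (∫ x in (0:ℝ)..π, ∫ y in (0:ℝ)..π,
      (Li n (z * Real.cos x) - Li n (z * Real.cos y)) / (Real.cos x - Real.cos y))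
    = (π^2/2) * (Li n z - Li n (-z)) := by
  have hbound (k : ℕ) (x y : ℝ) : ‖z ^ (k + 1) / ((k : ℝ) + 1) ^ n *
      ∑ i ∈ range (k + 1), cos x ^ i * cos y ^ (k - i)‖ ≤ (k + 1) * |z| ^ (k + 1) := by
    rw [Real.norm_eq_abs, abs_mul, mul_comm _ (|z| ^ _)]
    exact mul_le_mul (abs_pow_succ_div_le n k z)
      (abs_sum_pow_mul_pow_le (abs_cos_le_one x) (abs_cos_le_one y) k) (abs_nonneg _)
      (by positivity)
  calc _ = ∫ x in (0 : ℝ)..π, ∫ y in (0 : ℝ)..π, ∑' k : ℕ, z ^ (k + 1) / ((k : ℝ) + 1) ^ n *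
          ∑ i ∈ range (k + 1), cos x ^ i * cos y ^ (k - i) :=
        intervalIntegral.integral_congr fun x _ => integral_Li_sub_Li_div_cos_sub_cos n hz x
    _ = ∑' k : ℕ, ∫ x in (0 : ℝ)..π, ∫ y in (0 : ℝ)..π, z ^ (k + 1) / ((k : ℝ) + 1) ^ n *
          ∑ i ∈ range (k + 1), cos x ^ i * cos y ^ (k - i) :=
        intervalIntegral_intervalIntegral_tsum_of_norm_le (fun k => by fun_prop)
          hbound (summable_succ_mul_pow_succ hz)
    _ = ∑' k : ℕ, z ^ (k + 1) / ((k : ℝ) + 1) ^ n * if Even k then π ^ 2 else 0 := by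
        simp only [intervalIntegral.integral_const_mul, integral_integral_sum_cos_pow_mul_cos_pow]
    _ = _ := by
        rw [Li_sub_Li_neg n hz, ← tsum_mul_left]
        refine tsum_congr fun k => ?_
        split_ifs <;> ring

theorem stmt12 (n : ℕ) (hn : 1 ≤ n) (z : ℝ) (hz : |z| < 1) :
    (∫ x in (0:ℝ)..π, ∫ y in (0:ℝ)..π,
      (Li n (z * Real.cos x) - Li n (z * Real.cos y)) / (Real.cos x - Real.cos y))
    = (π^2/2) * (Li n z - Li n (-z)) :=
  stmt12_general n z hz
end

section
/- For real z with |z| < 1, the double integral over [0,π]² of (log(1+z cos θ₁) − log(1+z cos θ₂))/(cos θ₁ − cos θ₂) dθ₁ dθ₂ equals (π²/2)·log((1+z)/(1−z)). -/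
/-!
For `cos x ≠ cos y` the integrand is a divided difference of `t ↦ log (1 + t c)`, so it equals
`∫ t in 0..z, (1 + t cos x)⁻¹ (1 + t cos y)⁻¹`. Exchanging the order of integration, the double
integral becomes `∫ t in 0..z, (∫ x in 0..π, (1 + t cos x)⁻¹)²`, and the inner integral is the
classical `π / √(1 - t²)`. What remains is
`∫ t in 0..z, π² / (1 - t²) = (π² / 2) log ((1 + z) / (1 - z))`.
-/

open Real MeasureTheory intervalIntegral Set

lemma one_add_mul_pos_of_abs_lt {t c : ℝ} (ht : |t| < 1) (hc : |c| ≤ 1) : 0 < 1 + t * c := by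
  have : |t * c| < 1 := by
    rw [abs_mul]; exact (mul_le_of_le_one_right (abs_nonneg t) hc).trans_lt ht
  linarith [neg_abs_le (t * c)]

lemma abs_lt_one_of_mem_uIcc {z t : ℝ} (hz : |z| < 1) (ht : t ∈ uIcc 0 z) : |t| < 1 := by
  simpa using (abs_sub_left_of_mem_uIcc ht).trans_lt (by simpa using hz)

-- The Weierstrass primitive `(2 / s) arctan (√((1 - a) / (1 + a)) tan (x / 2))`, rewritten with
-- the tangent subtraction formula into a form that is smooth on all of `ℝ`.
lemma hasDerivAt_primitive_inv_one_add_mul_cos {a : ℝ} (ha : |a| < 1) (x : ℝ) :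
    HasDerivAt (fun x => (x - 2 * arctan (a * sin x / (1 + √(1 - a ^ 2) + a * cos x))) /
      √(1 - a ^ 2)) (1 + a * cos x)⁻¹ x := by
  set s := √(1 - a ^ 2)
  have hs : s ^ 2 = 1 - a ^ 2 := sq_sqrt (by nlinarith [sq_abs a, abs_nonneg a])
  have hs0 : 0 < s := sqrt_pos.mpr (by nlinarith [sq_abs a, abs_nonneg a])
  have hpos : 0 < 1 + a * cos x := one_add_mul_pos_of_abs_lt ha (abs_cos_le_one x)
  have hden : 0 < 1 + s + a * cos x := by linarith
  have hquot : HasDerivAt (fun x => a * sin x / (1 + s + a * cos x))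
      ((a * cos x * (1 + s + a * cos x) - a * sin x * (a * -sin x)) / (1 + s + a * cos x) ^ 2) x :=
    ((hasDerivAt_sin x).const_mul a).div
      (((hasDerivAt_cos x).const_mul a).const_add (1 + s)) hden.ne'
  refine (((hasDerivAt_id x).sub (((hasDerivAt_arctan _).comp x hquot).const_mul 2)).div_const
    s).congr_deriv ?_
  field_simp
  linear_combination (-a ^ 2 * (1 + s + a * cos x)) * sin_sq x - (1 + s + a * cos x) * hs

lemma integral_inv_one_add_mul_cos {a : ℝ} (ha : |a| < 1) :
    ∫ x in 0..π, (1 + a * cos x)⁻¹ = π / √(1 - a ^ 2) := by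
  rw [integral_eq_sub_of_hasDerivAt (fun x _ => hasDerivAt_primitive_inv_one_add_mul_cos ha x)]
  · simp
  · exact (continuous_const.add (continuous_const.mul continuous_cos)).continuousOn.inv₀
      (fun x _ => (one_add_mul_pos_of_abs_lt ha (abs_cos_le_one x)).ne') |>.intervalIntegrable

lemma log_sub_log_div_sub_eq_integral {z c d : ℝ} (hz : |z| < 1) (hc : |c| ≤ 1) (hd : |d| ≤ 1)
    (hcd : c ≠ d) :
    (log (1 + z * c) - log (1 + z * d)) / (c - d) =
      ∫ t in 0..z, (1 + t * c)⁻¹ * (1 + t * d)⁻¹ := by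
  have hpos : ∀ t ∈ uIcc 0 z, ∀ {e : ℝ}, |e| ≤ 1 → 0 < 1 + t * e := fun t ht _ he =>
    one_add_mul_pos_of_abs_lt (abs_lt_one_of_mem_uIcc hz ht) he
  have hlog : ∀ t ∈ uIcc 0 z, ∀ {e : ℝ}, |e| ≤ 1 →
      HasDerivAt (fun t => log (1 + t * e)) (e / (1 + t * e)) t := fun t ht e he => by
    simpa using (((hasDerivAt_id t).mul_const e).const_add 1).log (hpos t ht he).ne'
  rw [integral_eq_sub_of_hasDerivAt (f := fun t => (log (1 + t * c) - log (1 + t * d)) / (c - d))]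
  · simp
  · intro t ht
    refine ((hlog t ht hc).sub (hlog t ht hd)).div_const _ |>.congr_deriv ?_
    have hc' := (hpos t ht hc).ne'
    have hd' := (hpos t ht hd).ne'
    rw [div_sub_div _ _ hc' hd', div_div, ← mul_inv, ← one_div, div_eq_div_iff
      (mul_ne_zero (mul_ne_zero hc' hd') (sub_ne_zero.mpr hcd)) (mul_ne_zero hc' hd')]
    ring
  · refine ContinuousOn.intervalIntegrable fun t ht => ?_
    have hinv : ∀ {e : ℝ}, |e| ≤ 1 → ContinuousAt (fun t => (1 + t * e)⁻¹) t := fun he =>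
      (continuousAt_const.add (continuousAt_id.mul continuousAt_const)).inv₀ (hpos t ht he).ne'
    exact ((hinv hc).mul (hinv hd)).continuousWithinAt

lemma integral_inv_one_sub_sq {z : ℝ} (hz : |z| < 1) :
    ∫ t in 0..z, (1 - t ^ 2)⁻¹ = log ((1 + z) / (1 - z)) / 2 := by
  have hbounds : ∀ t ∈ uIcc 0 z, 0 < 1 + t ∧ 0 < 1 - t := fun t ht => by
    have := abs_lt.mp (abs_lt_one_of_mem_uIcc hz ht)
    constructor <;> linarith
  obtain ⟨hz₁, hz₂⟩ := hbounds z right_mem_uIcc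
  rw [integral_eq_sub_of_hasDerivAt (f := fun t => (log (1 + t) - log (1 - t)) / 2),
    log_div hz₁.ne' hz₂.ne']
  · simp
  · intro t ht
    obtain ⟨h₁, h₂⟩ := hbounds t ht
    refine ((((hasDerivAt_id t).const_add 1).log h₁.ne').sub
      (((hasDerivAt_id t).const_sub 1).log h₂.ne')).div_const 2 |>.congr_deriv ?_
    have : 1 - t ^ 2 ≠ 0 := by nlinarith
    simp only [id]
    field_simp
    ring
  · refine ContinuousOn.intervalIntegrable fun t ht => ?_
    obtain ⟨h₁, h₂⟩ := hbounds t ht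
    have : 1 - t ^ 2 ≠ 0 := by nlinarith
    exact (continuousAt_const.sub (continuousAt_id.pow 2)).inv₀ this |>.continuousWithinAt

lemma intervalIntegral_swap_of_continuousOn {E : Type*} [NormedAddCommGroup E] [NormedSpace ℝ E]
    {f : ℝ → ℝ → E} {a b c d : ℝ} (hf : ContinuousOn (Function.uncurry f) (uIcc a b ×ˢ uIcc c d)) :
    ∫ x in a..b, ∫ y in c..d, f x y = ∫ y in c..d, ∫ x in a..b, f x y :=
  intervalIntegral_intervalIntegral_swap <|
    (hf.integrableOn_compact (isCompact_uIcc.prod isCompact_uIcc)).mono_set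
      (prod_mono uIoc_subset_uIcc uIoc_subset_uIcc)

-- Off the null set `y = x` the denominator does not vanish, so the junk value `_ / 0 = 0`
-- is harmless.
lemma integral_log_sub_log_div_cos_sub_cos {z x : ℝ} (hz : |z| < 1) (hx : x ∈ Icc 0 π) :
    ∫ y in 0..π, (log (1 + z * cos x) - log (1 + z * cos y)) / (cos x - cos y) =
      ∫ y in 0..π, ∫ t in 0..z, (1 + t * cos x)⁻¹ * (1 + t * cos y)⁻¹ := by
  refine integral_congr_ae ?_
  filter_upwards [Measure.ae_ne volume x] with y hyx hy
  rw [uIoc_of_le pi_pos.le] at hy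
  exact log_sub_log_div_sub_eq_integral hz (abs_cos_le_one x) (abs_cos_le_one y)
    fun h => hyx (injOn_cos (Ioc_subset_Icc_self hy) hx h.symm)

theorem stmt14 (z : ℝ) (hz : |z| < 1) :
    (∫ x in (0:ℝ)..π, ∫ y in (0:ℝ)..π,
      (Real.log (1 + z * Real.cos x) - Real.log (1 + z * Real.cos y)) /
        (Real.cos x - Real.cos y))
    = (π^2/2) * Real.log ((1 + z) / (1 - z)) := by
  have hpos : ∀ t ∈ uIcc 0 z, ∀ x, 1 + t * cos x ≠ 0 := fun t ht x =>
    (one_add_mul_pos_of_abs_lt (abs_lt_one_of_mem_uIcc hz ht) (abs_cos_le_one x)).ne'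
  have hsq : ∀ t ∈ uIcc 0 z, 0 < 1 - t ^ 2 := fun t ht => by
    have := abs_lt_one_of_mem_uIcc hz ht
    nlinarith [sq_abs t, abs_nonneg t]
  calc _ = ∫ x in 0..π, ∫ y in 0..π, ∫ t in 0..z, (1 + t * cos x)⁻¹ * (1 + t * cos y)⁻¹ :=
        integral_congr fun x hx => integral_log_sub_log_div_cos_sub_cos hz
          (by rwa [uIcc_of_le pi_pos.le] at hx)
    _ = ∫ x in 0..π, ∫ t in 0..z, ∫ y in 0..π, (1 + t * cos x)⁻¹ * (1 + t * cos y)⁻¹ :=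
        integral_congr fun x _ => intervalIntegral_swap_of_continuousOn <| by
          refine ContinuousOn.mul ?_ ?_ <;>
            exact ContinuousOn.inv₀ (by fun_prop) fun p hp => hpos _ hp.2 _
    _ = ∫ x in 0..π, ∫ t in 0..z, (1 + t * cos x)⁻¹ * (π / √(1 - t ^ 2)) :=
        integral_congr fun x _ => integral_congr fun t ht => by
          rw [intervalIntegral.integral_const_mul,
            integral_inv_one_add_mul_cos (abs_lt_one_of_mem_uIcc hz ht)]
    _ = ∫ t in 0..z, ∫ x in 0..π, (1 + t * cos x)⁻¹ * (π / √(1 - t ^ 2)) :=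
        intervalIntegral_swap_of_continuousOn <|
          (ContinuousOn.inv₀ (by fun_prop) fun p hp => hpos _ hp.2 _).mul
            (continuousOn_const.div (by fun_prop) fun p hp => (sqrt_pos.mpr (hsq _ hp.2)).ne')
    _ = ∫ t in 0..z, π ^ 2 * (1 - t ^ 2)⁻¹ := integral_congr fun t ht => by
        rw [intervalIntegral.integral_mul_const,
          integral_inv_one_add_mul_cos (abs_lt_one_of_mem_uIcc hz ht), div_mul_div_comm,
          mul_self_sqrt (hsq t ht).le, div_eq_mul_inv, ← sq]
    _ = _ := by rw [intervalIntegral.integral_const_mul, integral_inv_one_sub_sq hz]; ring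
end

section
/- For every n ≥ 0, the double integral over [0,π]² of (cos^n θ₁ − cos^n θ₂)/(cos θ₁ − cos θ₂) dθ₁ dθ₂ equals π² if n is odd and 0 if n is even. -/
/-!
Expanding the sum, the double integral is `∑_{i+j=n-1} I i * I j` with `I k = ∫₀^π cos^k`.
The Wallis recurrence `(k+2) I(k+2) = (k+1) I k`, together with the symmetry
`2 ∑_{i+j=m} i I i I j = m ∑_{i+j=m} I i I j`, shows that these convolutions do not change when
`m` increases by two, so they all equal `I 0 ^ 2 = π²` or `2 I 0 I 1 = 0`.
-/

open Real Finset

theorem intervalIntegral.integral_integral_sum_mul {ι : Type*} (s : Finset ι) {f g : ι → ℝ → ℝ}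
    {a b c d : ℝ} (hf : ∀ i ∈ s, IntervalIntegrable (f i) MeasureTheory.volume a b)
    (hg : ∀ i ∈ s, IntervalIntegrable (g i) MeasureTheory.volume c d) :
    ∫ x in a..b, ∫ y in c..d, ∑ i ∈ s, f i x * g i y
      = ∑ i ∈ s, (∫ x in a..b, f i x) * ∫ y in c..d, g i y := by
  have hinner : ∀ x, ∫ y in c..d, ∑ i ∈ s, f i x * g i y
      = ∑ i ∈ s, f i x * ∫ y in c..d, g i y := fun x => by
    rw [intervalIntegral.integral_finsetSum fun i hi => (hg i hi).const_mul _]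
    simp only [intervalIntegral.integral_const_mul]
  simp only [hinner]
  rw [intervalIntegral.integral_finsetSum fun i hi => (hf i hi).mul_const _]
  simp only [intervalIntegral.integral_mul_const]

namespace Finset.Nat

theorem two_mul_sum_antidiagonal_fst_mul {R : Type*} [CommSemiring R] (a : ℕ → R) (m : ℕ) :
    2 * ∑ p ∈ antidiagonal m, (p.1 : R) * (a p.1 * a p.2)
      = m * ∑ p ∈ antidiagonal m, a p.1 * a p.2 := by
  have hswap : ∑ p ∈ antidiagonal m, (p.1 : R) * (a p.1 * a p.2)
      = ∑ p ∈ antidiagonal m, (p.2 : R) * (a p.1 * a p.2) := by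
    rw [← sum_antidiagonal_swap]
    exact sum_congr rfl fun p _ => by simp only [Prod.fst_swap, Prod.snd_swap, mul_comm (a p.2)]
  rw [two_mul]
  nth_rewrite 2 [hswap]
  rw [← sum_add_distrib, mul_sum]
  refine sum_congr rfl fun p hp => ?_
  rw [← add_mul, ← Nat.cast_add, mem_antidiagonal.mp hp]

variable {K : Type*} [Field K] [CharZero K] {a : ℕ → K}

theorem sum_antidiagonal_add_two_mul_eq (ha₁ : a 1 = 0)
    (hrec : ∀ k : ℕ, ((k : K) + 2) * a (k + 2) = (k + 1) * a k) (m : ℕ) :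
    ∑ p ∈ antidiagonal (m + 2), a p.1 * a p.2 = ∑ p ∈ antidiagonal m, a p.1 * a p.2 := by
  have hshift : ∑ p ∈ antidiagonal (m + 2), (p.1 : K) * (a p.1 * a p.2)
      = ∑ p ∈ antidiagonal m, ((p.1 : K) + 1) * (a p.1 * a p.2) := by
    rw [sum_antidiagonal_succ, sum_antidiagonal_succ]
    simp only [Nat.cast_zero, zero_mul, zero_add, Nat.cast_one, ha₁, mul_zero]
    refine sum_congr rfl fun p _ => ?_
    rw [show p.1 + 1 + 1 = p.1 + 2 from rfl]
    push_cast
    linear_combination a p.2 * hrec p.1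
  apply mul_left_cancel₀ (show ((m : K) + 2) ≠ 0 by norm_cast)
  calc ((m : K) + 2) * ∑ p ∈ antidiagonal (m + 2), a p.1 * a p.2
      = 2 * ∑ p ∈ antidiagonal (m + 2), (p.1 : K) * (a p.1 * a p.2) := by
        rw [two_mul_sum_antidiagonal_fst_mul]
        push_cast
        rfl
    _ = 2 * ∑ p ∈ antidiagonal m, (p.1 : K) * (a p.1 * a p.2)
          + 2 * ∑ p ∈ antidiagonal m, a p.1 * a p.2 := by
        simp only [hshift, add_mul, one_mul, sum_add_distrib, mul_add]
    _ = ((m : K) + 2) * ∑ p ∈ antidiagonal m, a p.1 * a p.2 := by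
        rw [two_mul_sum_antidiagonal_fst_mul]
        ring

theorem sum_antidiagonal_mul_eq_ite (ha₁ : a 1 = 0)
    (hrec : ∀ k : ℕ, ((k : K) + 2) * a (k + 2) = (k + 1) * a k) (m : ℕ) :
    ∑ p ∈ antidiagonal m, a p.1 * a p.2 = if Even m then a 0 ^ 2 else 0 := by
  induction m using Nat.twoStepInduction with
  | zero => simp [sq]
  | one => simp [sum_antidiagonal_succ, ha₁]
  | more m ih _ =>
    rw [sum_antidiagonal_add_two_mul_eq ha₁ hrec, ih]
    simp [Nat.even_add]

end Finset.Nat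

theorem integral_cos_pow_recurrence (k : ℕ) :
    ((k : ℝ) + 2) * ∫ x in (0 : ℝ)..π, cos x ^ (k + 2)
      = (k + 1) * ∫ x in (0 : ℝ)..π, cos x ^ k := by
  rw [integral_cos_pow]
  simp only [sin_pi, sin_zero, mul_zero, sub_zero, zero_div, zero_add]
  field_simp

theorem stmt15 (n : ℕ) :
    (∫ x in (0:ℝ)..π, ∫ y in (0:ℝ)..π,
      ∑ k ∈ Finset.range n, Real.cos x ^ k * Real.cos y ^ (n - 1 - k))
    = if Odd n then π^2 else 0 := by
  have hint : ∀ k : ℕ, IntervalIntegrable (fun x => cos x ^ k) MeasureTheory.volume 0 π :=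
    fun k => (continuous_cos.pow k).intervalIntegrable 0 π
  rw [intervalIntegral.integral_integral_sum_mul _ (fun k _ => hint k) (fun k _ => hint (n - 1 - k))]
  cases n with
  | zero => simp
  | succ m =>
    simp only [Nat.add_sub_cancel, ← Finset.Nat.sum_antidiagonal_eq_sum_range_succ
      (fun i j => (∫ x in (0:ℝ)..π, cos x ^ i) * ∫ x in (0:ℝ)..π, cos x ^ j)]
    rw [Finset.Nat.sum_antidiagonal_mul_eq_ite (a := fun k => ∫ x in (0:ℝ)..π, cos x ^ k)
      (by simp) integral_cos_pow_recurrence]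
    simp [Nat.odd_add_one]
end

section
/- For F analytic on a disk of radius > 1 with F(z) = ∑_{n≥0} a_n z^n, and for |z| ≤ 1: (1/π²)·∫₀^π ∫₀^π (F(z cos θ₁) − F(z cos θ₂))/(cos θ₁ − cos θ₂) dθ₁ dθ₂ = (F(z) − F(−z))/2. -/
/-!
Expanding `F` in its power series, the `n`-th term of the difference quotient is
`a n z^n ∑_{k<n} cos^k θ₁ cos^(n-1-k) θ₂`, so the double integral of that term is
`a n z^n ∑_{k<n} W_k W_{n-1-k}` with `W_k = ∫₀^π cos^k`. The Wallis recurrence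
`(k+2) W_{k+2} = (k+1) W_k` together with `W_1 = 0` forces these convolutions to be constant
along each parity class, equal to `W_0² = π²` for odd `n` and to `0` for even `n`; this picks out
the odd part `(F z - F (-z)) / 2`. Since `F` has radius of convergence beyond `1`, the terms are
dominated by the summable `|a n| n π`, which justifies integrating term by term; the diagonal
`cos θ₁ = cos θ₂`, where the integrand takes a junk value, is a null set.
-/

open Real Finset MeasureTheory
open scoped Interval

theorem sum_antidiagonal_mul_add_two_of_recurrence {w : ℕ → ℝ}
    (hw : ∀ k : ℕ, (k + 2) * w (k + 2) = (k + 1) * w k) (hw₁ : w 1 = 0) (N : ℕ) :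
    ∑ p ∈ antidiagonal (N + 2), w p.1 * w p.2 = ∑ p ∈ antidiagonal N, w p.1 * w p.2 := by
  have hsymm : ∀ M : ℕ, (M : ℝ) * ∑ p ∈ antidiagonal M, w p.1 * w p.2
      = 2 * ∑ p ∈ antidiagonal M, (p.1 : ℝ) * (w p.1 * w p.2) := by
    intro M
    have hswap := Nat.sum_antidiagonal_swap (n := M) (f := fun p => (p.1 : ℝ) * (w p.1 * w p.2))
    calc (M : ℝ) * ∑ p ∈ antidiagonal M, w p.1 * w p.2
        = ∑ p ∈ antidiagonal M, ((p.1 : ℝ) * (w p.1 * w p.2) + p.2 * (w p.2 * w p.1)) := by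
          rw [Finset.mul_sum]
          refine sum_congr rfl fun p hp => ?_
          rw [← mem_antidiagonal.mp hp]; push_cast; ring
      _ = 2 * ∑ p ∈ antidiagonal M, (p.1 : ℝ) * (w p.1 * w p.2) := by
          rw [sum_add_distrib, ← hswap]; simp only [Prod.fst_swap, Prod.snd_swap]; ring
  have hshift : ∑ p ∈ antidiagonal (N + 2), (p.1 : ℝ) * (w p.1 * w p.2)
      = ∑ p ∈ antidiagonal N, ((p.1 : ℝ) + 1) * (w p.1 * w p.2) := by
    rw [Nat.sum_antidiagonal_succ, Nat.sum_antidiagonal_succ]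
    simp only [Nat.cast_zero, zero_mul, zero_add, Nat.cast_add, Nat.cast_one, hw₁, mul_zero]
    refine sum_congr rfl fun p _ => ?_
    rw [add_assoc, one_add_one_eq_two, ← mul_assoc, hw]; ring
  have key : ((N : ℝ) + 2) * ∑ p ∈ antidiagonal (N + 2), w p.1 * w p.2
      = ((N : ℝ) + 2) * ∑ p ∈ antidiagonal N, w p.1 * w p.2 := by
    have h := hsymm (N + 2)
    push_cast at h
    rw [h, hshift]
    simp only [add_mul, one_mul, sum_add_distrib, mul_add, hsymm N]
  exact mul_left_cancel₀ (by positivity) key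

theorem sum_antidiagonal_mul_of_recurrence {w : ℕ → ℝ}
    (hw : ∀ k : ℕ, (k + 2) * w (k + 2) = (k + 1) * w k) (hw₁ : w 1 = 0) (N : ℕ) :
    ∑ p ∈ antidiagonal N, w p.1 * w p.2 = if Even N then w 0 ^ 2 else 0 := by
  induction N using Nat.twoStepInduction with
  | zero => simp [sq]
  | one => simp [Nat.sum_antidiagonal_succ, hw₁]
  | more N ih _ =>
    rw [sum_antidiagonal_mul_add_two_of_recurrence hw hw₁, ih]
    simp [Nat.even_add]

noncomputable def cosPowIntegral (k : ℕ) : ℝ := ∫ x in (0 : ℝ)..π, cos x ^ k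

theorem cosPowIntegral_zero : cosPowIntegral 0 = π := by simp [cosPowIntegral]

theorem cosPowIntegral_one : cosPowIntegral 1 = 0 := by simp [cosPowIntegral]

theorem cosPowIntegral_add_two (k : ℕ) :
    (k + 2) * cosPowIntegral (k + 2) = (k + 1) * cosPowIntegral k := by
  rw [cosPowIntegral, integral_cos_pow, cosPowIntegral]
  simp only [sin_pi, sin_zero, mul_zero, sub_zero, zero_div, zero_add]
  field_simp

theorem sum_range_cosPowIntegral_mul (n : ℕ) :
    ∑ k ∈ range n, cosPowIntegral k * cosPowIntegral (n - 1 - k)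
      = if Odd n then π ^ 2 else 0 := by
  cases n with
  | zero => simp
  | succ N =>
    rw [Nat.add_sub_cancel, ← Nat.sum_antidiagonal_eq_sum_range_succ
      (fun i j => cosPowIntegral i * cosPowIntegral j),
      sum_antidiagonal_mul_of_recurrence cosPowIntegral_add_two cosPowIntegral_one,
      cosPowIntegral_zero]
    simp [Nat.odd_add_one]

theorem summable_abs_mul_nat_of_summable_mul_pow {a : ℕ → ℝ} {w : ℝ} (hw : 1 < w)
    (h : Summable fun n => a n * w ^ n) : Summable fun n => |a n| * n := by
  have hw₀ : 0 < w := one_pos.trans hw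
  obtain ⟨C, hC⟩ := h.tendsto_atTop_zero.norm.bddAbove_range
  have hgeom : Summable fun n : ℕ => C * (n * w⁻¹ ^ n) :=
    ((summable_pow_mul_geometric_of_norm_lt_one 1 (by
      rw [norm_inv, Real.norm_of_nonneg hw₀.le]; exact inv_lt_one_of_one_lt₀ hw)).mul_left C).congr
      fun n => by simp
  refine hgeom.of_nonneg_of_le (fun n => by positivity) fun n => ?_
  have hn : ‖a n * w ^ n‖ ≤ C := hC (Set.mem_range_self n)
  rw [norm_mul, norm_pow, Real.norm_of_nonneg hw₀.le] at hn
  calc |a n| * n = ‖a n‖ * w ^ n * (n * w⁻¹ ^ n) := by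
        rw [Real.norm_eq_abs, inv_pow]; field_simp
    _ ≤ C * (n * w⁻¹ ^ n) := by gcongr

theorem hasSum_intervalIntegral_of_norm_le_summable {ι E : Type*} [Countable ι]
    [NormedAddCommGroup E] [NormedSpace ℝ E] {a b : ℝ} {F : ι → ℝ → E} {f : ℝ → E} {C : ι → ℝ}
    (hF : ∀ i, Continuous (F i)) (hC : Summable C) (hle : ∀ i t, ‖F i t‖ ≤ C i)
    (hlim : ∀ᵐ t, t ∈ Ι a b → HasSum (fun i => F i t) (f t)) :
    HasSum (fun i => ∫ t in a..b, F i t) (∫ t in a..b, f t) :=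
  intervalIntegral.hasSum_integral_of_dominated_convergence (fun i _ => C i)
    (fun i => (hF i).aestronglyMeasurable) (fun i => .of_forall fun t _ => hle i t)
    (.of_forall fun _ _ => hC) intervalIntegrable_const hlim

theorem abs_geom_sum₂_le {u v : ℝ} (hu : |u| ≤ 1) (hv : |v| ≤ 1) (n : ℕ) :
    |∑ k ∈ range n, u ^ k * v ^ (n - 1 - k)| ≤ n := by
  calc |∑ k ∈ range n, u ^ k * v ^ (n - 1 - k)|
      ≤ ∑ k ∈ range n, |u| ^ k * |v| ^ (n - 1 - k) := by
        simpa only [abs_mul, abs_pow] using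
          abs_sum_le_sum_abs (fun k => u ^ k * v ^ (n - 1 - k)) (range n)
    _ ≤ ∑ _k ∈ range n, (1 : ℝ) :=
        sum_le_sum fun k _ => mul_le_one₀ (pow_le_one₀ (abs_nonneg _) hu) (by positivity)
          (pow_le_one₀ (abs_nonneg _) hv)
    _ = n := by simp

theorem hasSum_mul_pow_ite_odd {a : ℕ → ℝ} {z A B : ℝ} (c : ℝ)
    (hA : HasSum (fun n => a n * z ^ n) A) (hB : HasSum (fun n => a n * (-z) ^ n) B) :
    HasSum (fun n => a n * z ^ n * if Odd n then c else 0) (c * (A - B) / 2) := by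
  refine (((hA.sub hB).mul_left c).div_const 2).congr_fun fun n => ?_
  rcases Nat.even_or_odd n with hn | hn
  · simp [hn.neg_pow, Nat.not_odd_iff_even.mpr hn]
  · simp only [hn.neg_pow, hn, if_true]; ring

theorem ae_cos_ne_of_mem_Icc {x : ℝ} (hx : x ∈ Set.Icc 0 π) :
    ∀ᵐ y, y ∈ Ι 0 π → cos x ≠ cos y := by
  filter_upwards [compl_mem_ae_iff.mpr (measure_singleton x)] with y hyx hy hcos
  rw [Set.uIoc_of_le pi_pos.le] at hy
  exact hyx (injOn_cos ⟨hy.1.le, hy.2⟩ hx hcos.symm)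

noncomputable def quotientTerm (a : ℕ → ℝ) (z : ℝ) (n : ℕ) (x y : ℝ) : ℝ :=
  a n * z ^ n * ∑ k ∈ range n, cos x ^ k * cos y ^ (n - 1 - k)

section quotientTerm

variable (a : ℕ → ℝ)

theorem continuous_quotientTerm (z : ℝ) (n : ℕ) :
    Continuous (Function.uncurry (quotientTerm a z n)) := by
  unfold quotientTerm; fun_prop

theorem abs_quotientTerm_le {z : ℝ} (hz : |z| ≤ 1) (n : ℕ) (x y : ℝ) :
    |quotientTerm a z n x y| ≤ |a n| * n := by
  rw [quotientTerm, abs_mul, abs_mul, abs_pow]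
  calc |a n| * |z| ^ n * |∑ k ∈ range n, cos x ^ k * cos y ^ (n - 1 - k)| ≤ |a n| * 1 * n := by
        gcongr
        · exact pow_le_one₀ (abs_nonneg z) hz
        · exact abs_geom_sum₂_le (abs_cos_le_one x) (abs_cos_le_one y) n
    _ = |a n| * n := by rw [mul_one]

theorem abs_integral_quotientTerm_le {z : ℝ} (hz : |z| ≤ 1) (n : ℕ) (x : ℝ) :
    |∫ y in (0 : ℝ)..π, quotientTerm a z n x y| ≤ |a n| * n * π := by
  simpa [abs_of_pos pi_pos] using intervalIntegral.norm_integral_le_of_norm_le_const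
    (a := 0) (b := π) (f := quotientTerm a z n x) fun y _ => abs_quotientTerm_le a hz n x y

theorem hasSum_quotientTerm {F : ℝ → ℝ} {r : ℝ} (hr : 1 < r)
    (hF : ∀ w : ℝ, |w| < r → HasSum (fun n : ℕ => a n * w ^ n) (F w)) {z : ℝ} (hz : |z| ≤ 1)
    {x y : ℝ} (hxy : cos x ≠ cos y) :
    HasSum (fun n => quotientTerm a z n x y)
      ((F (z * cos x) - F (z * cos y)) / (cos x - cos y)) := by
  have hmem : ∀ t, |z * cos t| < r := fun t => by
    rw [abs_mul]
    exact (mul_le_one₀ hz (abs_nonneg _) (abs_cos_le_one t)).trans_lt hr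
  refine (((hF _ (hmem x)).sub (hF _ (hmem y))).div_const _).congr_fun fun n => ?_
  rw [quotientTerm, eq_div_iff (sub_ne_zero.mpr hxy)]
  linear_combination a n * z ^ n * geom_sum₂_mul (cos x) (cos y) n

theorem integral_integral_quotientTerm (z : ℝ) (n : ℕ) :
    ∫ x in (0 : ℝ)..π, ∫ y in (0 : ℝ)..π, quotientTerm a z n x y
      = a n * z ^ n * if Odd n then π ^ 2 else 0 := by
  have hinner : ∀ x, ∫ y in (0 : ℝ)..π, ∑ k ∈ range n, cos x ^ k * cos y ^ (n - 1 - k)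
      = ∑ k ∈ range n, cos x ^ k * cosPowIntegral (n - 1 - k) := fun x => by
    rw [intervalIntegral.integral_finsetSum fun k _ => by
      apply Continuous.intervalIntegrable; fun_prop]
    simp only [intervalIntegral.integral_const_mul, cosPowIntegral]
  have houter : ∫ x in (0 : ℝ)..π, ∑ k ∈ range n, cos x ^ k * cosPowIntegral (n - 1 - k)
      = ∑ k ∈ range n, cosPowIntegral k * cosPowIntegral (n - 1 - k) := by
    rw [intervalIntegral.integral_finsetSum fun k _ => by
      apply Continuous.intervalIntegrable; fun_prop]
    simp only [intervalIntegral.integral_mul_const, cosPowIntegral]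
  simp only [quotientTerm, intervalIntegral.integral_const_mul, hinner, houter,
    sum_range_cosPowIntegral_mul]

end quotientTerm

theorem stmt16 (F : ℝ → ℝ) (a : ℕ → ℝ) (r : ℝ) (hr : 1 < r)
    (hF : ∀ w : ℝ, |w| < r → HasSum (fun n : ℕ => a n * w^n) (F w))
    (z : ℝ) (hz : |z| ≤ 1) :
    (1/π^2) * (∫ x in (0:ℝ)..π, ∫ y in (0:ℝ)..π,
      (F (z * Real.cos x) - F (z * Real.cos y)) / (Real.cos x - Real.cos y))
    = (F z - F (-z)) / 2 := by
  have hs : Summable fun n => |a n| * n :=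
    summable_abs_mul_nat_of_summable_mul_pow (w := (1 + r) / 2) (by linarith)
      (hF _ (by rw [abs_of_pos (by linarith)]; linarith)).summable
  have hinner : ∀ᵐ x, x ∈ Ι 0 π → HasSum (fun n => ∫ y in (0 : ℝ)..π, quotientTerm a z n x y)
      (∫ y in (0 : ℝ)..π, (F (z * cos x) - F (z * cos y)) / (cos x - cos y)) := by
    refine .of_forall fun x hx => hasSum_intervalIntegral_of_norm_le_summable
      (fun n => (continuous_quotientTerm a z n).uncurry_left x) hs (abs_quotientTerm_le a hz · x)
      ((ae_cos_ne_of_mem_Icc ?_).mono fun y hxy hy => hasSum_quotientTerm a hr hF hz (hxy hy))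
    rw [Set.uIoc_of_le pi_pos.le] at hx
    exact Set.Ioc_subset_Icc_self hx
  have hdouble := hasSum_intervalIntegral_of_norm_le_summable
    (fun n => intervalIntegral.continuous_parametric_intervalIntegral_of_continuous'
      (continuous_quotientTerm a z n) 0 π) (hs.mul_right π) (abs_integral_quotientTerm_le a hz)
    hinner
  have hzr : |z| < r := hz.trans_lt hr
  rw [funext (integral_integral_quotientTerm a z)] at hdouble
  rw [hdouble.unique (hasSum_mul_pow_ite_odd (π ^ 2) (hF z hzr) (hF (-z) (by rwa [abs_neg])))]
  field_simp
end
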